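/- arXiv:quant-ph/0011073 — 12 statements merged into one kernel-verified Lean document; each statement's English description precedes it below -/
import Mathlib

section
/- For any pure input qubit |φ⟩ = α|0⟩ + β|1⟩ with |α|²+|β|² = 1, the reduced density matrix of the first clone at the output of the universal 1→2 cloner is ρ_c = (1/2)(I + (2/3) s_in·σ), where s_in is the Bloch vector of |φ⟩. In particular the fidelity ⟨φ|ρ_c|φ⟩ = 5/6. -/
open scoped ComplexConjugate ComplexOrder
open Finset Matrix

noncomputable section

/-- Index set for three qubits: (clone 1, clone 2, ancilla). -/
abbrev I3 := Fin 2 × Fin 2 × Fin 2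

/-- Image of |0⟩|00⟩ under the universal 1→2 cloner:
    √(2/3)|00⟩|1⟩ − (1/√6)(|01⟩+|10⟩)|0⟩. -/
def out0 : I3 → ℂ := fun p =>
  if p = (0, 0, 1) then ((Real.sqrt (2/3) : ℝ) : ℂ)
  else if p = (0, 1, 0) then -(((1 / Real.sqrt 6 : ℝ)) : ℂ)
  else if p = (1, 0, 0) then -(((1 / Real.sqrt 6 : ℝ)) : ℂ)
  else 0

/-- Image of |1⟩|00⟩ under the universal 1→2 cloner:
    −√(2/3)|11⟩|0⟩ + (1/√6)(|10⟩+|01⟩)|1⟩. -/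
def out1 : I3 → ℂ := fun p =>
  if p = (1, 1, 0) then -((Real.sqrt (2/3) : ℝ) : ℂ)
  else if p = (1, 0, 1) then (((1 / Real.sqrt 6 : ℝ)) : ℂ)
  else if p = (0, 1, 1) then (((1 / Real.sqrt 6 : ℝ)) : ℂ)
  else 0

/-- Output of the cloner on input α|0⟩+β|1⟩. -/
def cloneOut (α β : ℂ) : I3 → ℂ := fun p => α * out0 p + β * out1 p

/-- Output density matrix U(|φ⟩⟨φ| ⊗ |00⟩⟨00|)U†. -/
def rhoOut (α β : ℂ) : Matrix I3 I3 ℂ :=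
  Matrix.of fun p q => cloneOut α β p * conj (cloneOut α β q)

/-- Reduced state of the first clone. -/
def rhoC (α β : ℂ) : Matrix (Fin 2) (Fin 2) ℂ :=
  Matrix.of fun i j => ∑ b : Fin 2, ∑ c : Fin 2, rhoOut α β (i, b, c) (j, b, c)

/-- Reduced state of the ancilla. -/
def rhoA (α β : ℂ) : Matrix (Fin 2) (Fin 2) ℂ :=
  Matrix.of fun i j => ∑ a : Fin 2, ∑ b : Fin 2, rhoOut α β (a, b, i) (a, b, j)

/-- Reduced state of the two clones. -/
def rhoCC (α β : ℂ) : Matrix (Fin 2 × Fin 2) (Fin 2 × Fin 2) ℂ :=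
  Matrix.of fun p q => ∑ c : Fin 2, rhoOut α β (p.1, p.2, c) (q.1, q.2, c)

def σx : Matrix (Fin 2) (Fin 2) ℂ := !![0, 1; 1, 0]
def σy : Matrix (Fin 2) (Fin 2) ℂ := !![0, -Complex.I; Complex.I, 0]
def σz : Matrix (Fin 2) (Fin 2) ℂ := !![1, 0; 0, -1]

/-- s·σ for a real 3-vector s. -/
def pauliDot (s : Fin 3 → ℝ) : Matrix (Fin 2) (Fin 2) ℂ :=
  ((s 0 : ℝ) : ℂ) • σx + ((s 1 : ℝ) : ℂ) • σy + ((s 2 : ℝ) : ℂ) • σz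

/-- (1/2)(I + s·σ), the state with Bloch vector s. -/
def blochMat (s : Fin 3 → ℝ) : Matrix (Fin 2) (Fin 2) ℂ :=
  (1/2 : ℂ) • (1 + pauliDot s)

def φvec (α β : ℂ) : Fin 2 → ℂ := ![α, β]

/-- Outer product |v⟩⟨v| on a qubit. -/
def outer (v : Fin 2 → ℂ) : Matrix (Fin 2) (Fin 2) ℂ :=
  Matrix.of fun i j => v i * conj (v j)

/-- The images U(|i⟩|00⟩) of the two input basis states. -/
def Uout : Fin 2 → I3 → ℂ := ![out0, out1]

/-- Effective operator on the input qubit corresponding to an operator F on the output: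
    E i j = ⟨U(|i⟩|00⟩)| F |U(|j⟩|00⟩)⟩ = (⟨00|_{ba} U† F U |00⟩_{ba}) i j. -/
def effOf (F : Matrix I3 I3 ℂ) : Matrix (Fin 2) (Fin 2) ℂ :=
  Matrix.of fun i j => ∑ p : I3, ∑ q : I3, conj (Uout i p) * F p q * Uout j q

/-- F ⊗ I ⊗ I: a measurement on the first clone only. -/
def extC (F : Matrix (Fin 2) (Fin 2) ℂ) : Matrix I3 I3 ℂ :=
  Matrix.of fun p q => F p.1 q.1 * (if p.2 = q.2 then 1 else 0)

/-- I ⊗ I ⊗ F: a measurement on the ancilla only. -/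
def extA (F : Matrix (Fin 2) (Fin 2) ℂ) : Matrix I3 I3 ℂ :=
  Matrix.of fun p q => (if (p.1, p.2.1) = (q.1, q.2.1) then 1 else 0) * F p.2.2 q.2.2

/-- F ⊗ I_ancilla: a measurement on the two clones. -/
def extCC (F : Matrix (Fin 2 × Fin 2) (Fin 2 × Fin 2) ℂ) : Matrix I3 I3 ℂ :=
  Matrix.of fun p q => F (p.1, p.2.1) (q.1, q.2.1) * (if p.2.2 = q.2.2 then 1 else 0)

/-- Bell basis on two qubits, in the order φ⁺, ψ⁺, φ⁻, ψ⁻. -/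
def bell : Fin 4 → (Fin 2 × Fin 2) → ℂ :=
  ![fun p => if p = (0,0) then ((1 / Real.sqrt 2 : ℝ) : ℂ)
             else if p = (1,1) then ((1 / Real.sqrt 2 : ℝ) : ℂ) else 0,
    fun p => if p = (0,1) then ((1 / Real.sqrt 2 : ℝ) : ℂ)
             else if p = (1,0) then ((1 / Real.sqrt 2 : ℝ) : ℂ) else 0,
    fun p => if p = (0,0) then ((1 / Real.sqrt 2 : ℝ) : ℂ)
             else if p = (1,1) then -((1 / Real.sqrt 2 : ℝ) : ℂ) else 0,
    fun p => if p = (0,1) then ((1 / Real.sqrt 2 : ℝ) : ℂ)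
             else if p = (1,0) then -((1 / Real.sqrt 2 : ℝ) : ℂ) else 0]

/-- Kronecker product of two single-qubit matrices. -/
def kron2 (A B : Matrix (Fin 2) (Fin 2) ℂ) : Matrix (Fin 2 × Fin 2) (Fin 2 × Fin 2) ℂ :=
  Matrix.of fun p q => A p.1 q.1 * B p.2 q.2

/-- Projector onto the symmetric subspace of two qubits: I − |ψ⁻⟩⟨ψ⁻|. -/
def symProj : Matrix (Fin 2 × Fin 2) (Fin 2 × Fin 2) ℂ :=
  1 - Matrix.of fun p q => bell 3 p * conj (bell 3 q)

/-- Projector onto the antisymmetric subspace: |ψ⁻⟩⟨ψ⁻|. -/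
def antiProj : Matrix (Fin 2 × Fin 2) (Fin 2 × Fin 2) ℂ :=
  Matrix.of fun p q => bell 3 p * conj (bell 3 q)

/-- Computational basis vector |abc⟩ of three qubits. -/
def e3 (a b c : Fin 2) : I3 → ℂ := fun p => if p = (a, b, c) then 1 else 0

/-- ∑ₚ conj(v p) w p, the inner product on three qubits. -/
def inner3 (v w : I3 → ℂ) : ℂ := ∑ p : I3, conj (v p) * w p

lemma sqrt23_sq : ((Real.sqrt (2/3) : ℝ) : ℂ) * ((Real.sqrt (2/3) : ℝ) : ℂ) = 2/3 := by
  rw [← Complex.ofReal_mul, Real.mul_self_sqrt (by norm_num)]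
  norm_num

lemma inv6_sq : (((1 / Real.sqrt 6 : ℝ)) : ℂ) * (((1 / Real.sqrt 6 : ℝ)) : ℂ) = 1/6 := by
  rw [← Complex.ofReal_mul]
  rw [show (1 / Real.sqrt 6) * (1 / Real.sqrt 6) = 1 / (Real.sqrt 6 * Real.sqrt 6) by ring,
    Real.mul_self_sqrt (by norm_num)]
  norm_num

lemma cross_prod : ((Real.sqrt (2/3) : ℝ) : ℂ) * (((1 / Real.sqrt 6 : ℝ)) : ℂ) = 1/3 := by
  rw [← Complex.ofReal_mul, one_div, ← Real.sqrt_inv, ← Real.sqrt_mul (by norm_num),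
    show (2/3 : ℝ) * 6⁻¹ = (1/3)^2 by norm_num, Real.sqrt_sq (by norm_num)]
  norm_num

lemma rhoC_eq (α β : ℂ) (hnorm : Complex.normSq α + Complex.normSq β = 1) :
    rhoC α β = (2/3 : ℂ) • outer (φvec α β) + (1/6 : ℂ) • 1 := by
  have h : α * conj α + β * conj β = 1 := by
    have := congrArg (Complex.ofReal) hnorm
    simpa [Complex.mul_conj] using this
  ext i j
  simp only [rhoC, rhoOut, cloneOut, out0, out1, outer, φvec, Matrix.of_apply,
    Fin.sum_univ_two, Matrix.add_apply, Matrix.smul_apply, Matrix.one_apply,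
    Matrix.cons_val_zero, Matrix.cons_val_one, Matrix.head_cons, smul_eq_mul,
    _root_.map_add, _root_.map_mul, _root_.map_neg]
  generalize ha : ((Real.sqrt (2/3) : ℝ) : ℂ) = a
  generalize hb : (((1 / Real.sqrt 6 : ℝ)) : ℂ) = b
  have ha2 : a * a = 2/3 := by rw [← ha]; exact sqrt23_sq
  have hb2 : b * b = 1/6 := by rw [← hb]; exact inv6_sq
  have hab : a * b = 1/3 := by rw [← ha, ← hb]; exact cross_prod
  have hca : conj a = a := by rw [← ha]; exact Complex.conj_ofReal _
  have hcb : conj b = b := by rw [← hb]; exact Complex.conj_ofReal _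
  fin_cases i <;> fin_cases j <;> norm_num [Prod.ext_iff, hca, hcb]
  · linear_combination (α * conj α) * ha2 + (α * conj α + β * conj β) * hb2 + (1/6 : ℂ) * h
  · linear_combination 2 * α * conj β * hab
  · linear_combination 2 * β * conj α * hab
  · linear_combination (β * conj β) * ha2 + (α * conj α + β * conj β) * hb2 + (1/6 : ℂ) * h

/-- the first clone's reduced state is (1/2)(I + (2/3) s_in·σ), and its
fidelity with the input is ⟨φ|ρ_c|φ⟩ = 5/6. -/
theorem clone_reduced_state (α β : ℂ) (s : Fin 3 → ℝ)
    (hnorm : Complex.normSq α + Complex.normSq β = 1)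
    (hs : outer (φvec α β) = blochMat s) :
    rhoC α β = (1/2 : ℂ) • (1 + (2/3 : ℂ) • pauliDot s) ∧
    ∑ i : Fin 2, ∑ j : Fin 2, conj (φvec α β i) * rhoC α β i j * φvec α β j = 5/6 := by
  have h : α * conj α + β * conj β = 1 := by
    have := congrArg (Complex.ofReal) hnorm
    simpa [Complex.mul_conj] using this
  have hpauli : pauliDot s = (2 : ℂ) • outer (φvec α β) - 1 := by
    have : (2 : ℂ) • outer (φvec α β) = (2 : ℂ) • blochMat s := by rw [hs]
    rw [this, blochMat, smul_smul]
    norm_num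
  have hrc := rhoC_eq α β hnorm
  constructor
  · rw [hrc, hpauli]
    ext i j
    simp [Matrix.add_apply, Matrix.smul_apply, Matrix.sub_apply]
    ring
  · rw [hrc]
    simp [Matrix.add_apply, Matrix.smul_apply, outer, Matrix.one_apply,
      Fin.sum_univ_two, φvec]
    linear_combination ((2/3 : ℂ) * (α * conj α + β * conj β) + 5/6) * h
end
end

section
/- For any pure input qubit |φ⟩ with Bloch vector s_in, the reduced density matrix of the ancilla at the output of the universal 1→2 cloner is ρ_a = (1/2)(I − (1/3) s_in·σ); i.e., the ancilla's Bloch vector is −(1/3) s_in. -/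
open scoped ComplexConjugate ComplexOrder
open Finset Matrix

noncomputable section

/-! Only two squared amplitudes of the cloner enter the ancilla's state, 2/3 and 1/6, and with
them that state is the linear function (2/3) (tr ρ) 1 − (1/3) ρ of the input ρ = |φ⟩⟨φ|. For
ρ = (1/2)(1 + s·σ) the Pauli matrices are traceless, so tr ρ = 1 and the ancilla's state is
(1/2)(1 − (1/3) s·σ). -/

lemma rhoA_eq_trace_smul_one_sub (α β : ℂ) :
    rhoA α β = (2/3 * (outer (φvec α β)).trace) • 1 - (1/3 : ℂ) • outer (φvec α β) := by
  have hc : conj ((√(2/3) : ℝ) : ℂ) * ((√(2/3) : ℝ) : ℂ) = 2/3 := by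
    rw [Complex.conj_ofReal, ← Complex.ofReal_mul, Real.mul_self_sqrt (by norm_num)]
    push_cast; ring
  have hd : conj ((1/√6 : ℝ) : ℂ) * ((1/√6 : ℝ) : ℂ) = 1/6 := by
    rw [Complex.conj_ofReal, ← Complex.ofReal_mul, ← mul_div_mul_comm,
      Real.mul_self_sqrt (by norm_num)]
    push_cast; ring
  unfold rhoA rhoOut cloneOut out0 out1
  generalize ((√(2/3) : ℝ) : ℂ) = c at hc ⊢
  generalize ((1/√6 : ℝ) : ℂ) = d at hd ⊢
  ext i j
  fin_cases i <;> fin_cases j <;> simp [outer, φvec, Fin.sum_univ_two, trace, Prod.ext_iff]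
  · linear_combination 2 * α * conj α * hd + β * conj β * hc
  · linear_combination -2 * α * conj β * hd
  · linear_combination -2 * β * conj α * hd
  · linear_combination α * conj α * hc + 2 * β * conj β * hd

lemma trace_blochMat (s : Fin 3 → ℝ) : (blochMat s).trace = 1 := by
  simp [blochMat, pauliDot, σx, σy, σz, Matrix.trace_fin_two]

theorem ancilla_reduced_state_general (α β : ℂ) (s : Fin 3 → ℝ)
    (hs : outer (φvec α β) = blochMat s) :
    rhoA α β = (1/2 : ℂ) • (1 - (1/3 : ℂ) • pauliDot s) := by
  rw [rhoA_eq_trace_smul_one_sub, hs, trace_blochMat, blochMat]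
  module

/-- the ancilla's reduced state is (1/2)(I − (1/3) s_in·σ). -/
theorem ancilla_reduced_state (α β : ℂ) (s : Fin 3 → ℝ)
    (hnorm : Complex.normSq α + Complex.normSq β = 1)
    (hs : outer (φvec α β) = blochMat s) :
    rhoA α β = (1/2 : ℂ) • (1 - (1/3 : ℂ) • pauliDot s) :=
  ancilla_reduced_state_general α β s hs
end
end

section
/- Let F = b(I + f·σ) be a POVM element applied to the ancilla output of the universal 1→2 cloner. Then the effective POVM element on the input qubit is E = b(I − (1/3) f·σ); in particular |e| ≤ 1/3 and no ancilla measurement yields a sharp effective measurement on the input. -/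
/-! Pulling back an ancilla operator M through the cloner gives (2/3) tr(M) I − (1/3) M, an
entrywise computation with the cloner amplitudes √(2/3) and ±1/√6. Since f·σ is traceless,
F = b(I + f·σ) pulls back to E = b(I − f·σ/3). A sharp effect |v⟩⟨v| is singular, whereas
det E = b²(1 − |f|²/9) > 0 because |f| ≤ 1. -/

open scoped ComplexConjugate ComplexOrder
open Finset Matrix

noncomputable section

lemma effOf_extA (M : Matrix (Fin 2) (Fin 2) ℂ) :
    effOf (extA M) = ((2/3 : ℂ) * M.trace) • 1 - (1/3 : ℂ) • M := by
  have h23 : ((Real.sqrt 2 : ℂ) / Real.sqrt 3) ^ 2 = 2 / 3 := by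
    rw [← Complex.ofReal_div, ← Complex.ofReal_pow, ← Real.sqrt_div' _ (by norm_num),
      Real.sq_sqrt (by norm_num)]
    norm_num
  have h6 : ((Real.sqrt 6 : ℂ)⁻¹) ^ 2 = 1 / 6 := by
    rw [← Complex.ofReal_inv, ← Complex.ofReal_pow, inv_pow, Real.sq_sqrt (by norm_num)]
    norm_num
  ext i j
  fin_cases i <;> fin_cases j <;>
  · simp [effOf, extA, Uout, out0, out1, Fintype.sum_prod_type, Matrix.trace_fin_two]
    grind

lemma trace_pauliDot (s : Fin 3 → ℝ) : (pauliDot s).trace = 0 := by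
  simp [pauliDot, σx, σy, σz, Matrix.trace_fin_two]

lemma det_one_sub_smul_pauliDot (c : ℂ) (s : Fin 3 → ℝ) :
    (1 - c • pauliDot s).det = 1 - c ^ 2 * ((s 0) ^ 2 + (s 1) ^ 2 + (s 2) ^ 2 : ℝ) := by
  simp [pauliDot, σx, σy, σz, Matrix.det_fin_two]
  linear_combination (c ^ 2 * (s 1) ^ 2) * Complex.I_sq

lemma det_outer (v : Fin 2 → ℂ) : (outer v).det = 0 := by
  simp [outer, Matrix.det_fin_two]
  ring

lemma effOf_extA_smul_one_add_pauliDot (c : ℂ) (s : Fin 3 → ℝ) :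
    effOf (extA (c • (1 + pauliDot s))) = c • (1 - (1/3 : ℂ) • pauliDot s) := by
  rw [effOf_extA, Matrix.trace_smul, Matrix.trace_add, Matrix.trace_one, trace_pauliDot,
    Fintype.card_fin]
  module

theorem ancilla_effective_general (b : ℝ) (f : Fin 3 → ℝ) (hb : 0 < b)
    (hf : (f 0)^2 + (f 1)^2 + (f 2)^2 ≤ 1) :
    effOf (extA ((b : ℂ) • (1 + pauliDot f))) =
      (b : ℂ) • (1 - (1/3 : ℂ) • pauliDot f) ∧
    ∀ v : Fin 2 → ℂ, effOf (extA ((b : ℂ) • (1 + pauliDot f))) ≠ outer v := by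
  rw [effOf_extA_smul_one_add_pauliDot]
  refine ⟨rfl, fun v hv => ?_⟩
  have hdet := congrArg Matrix.det hv
  rw [Matrix.det_smul, det_one_sub_smul_pauliDot, det_outer, Fintype.card_fin] at hdet
  have hpos : 0 < b ^ 2 * (1 - (1/3) ^ 2 * ((f 0)^2 + (f 1)^2 + (f 2)^2)) := by
    nlinarith [pow_pos hb 2]
  exact hpos.ne' (Complex.ofReal_injective (by push_cast at hdet ⊢; linear_combination hdet))

/-- a POVM element F = b(I + f·σ) on the ancilla has effective element
E = b(I − (1/3) f·σ) on the input; no ancilla measurement is sharp on the input. -/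
theorem ancilla_effective (b : ℝ) (f : Fin 3 → ℝ) (hb : 0 < b) (hb1 : b ≤ 1)
    (hf : (f 0)^2 + (f 1)^2 + (f 2)^2 ≤ 1) :
    effOf (extA ((b : ℂ) • (1 + pauliDot f))) =
      (b : ℂ) • (1 - (1/3 : ℂ) • pauliDot f) ∧
    ∀ v : Fin 2 → ℂ, effOf (extA ((b : ℂ) • (1 + pauliDot f))) ≠ outer v :=
  ancilla_effective_general b f hb hf
end
end

section
/- The reduced density matrix of the two clones at the output of the universal 1→2 cloner, for input Bloch vector s = (s_x,s_y,s_z), has matrix elements in the Bell basis {φ⁺, ψ⁺, φ⁻, ψ⁻} equal to (1/3)·[[1, s_x, s_z, 0],[s_x, 1, i s_y, 0],[s_z, −i s_y, 1, 0],[0,0,0,0]]; in particular it has no support on the antisymmetric state ψ⁻. -/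
/-!
Slicing the cloner output along the ancilla, `ρ^{cc} = ∑_c |χ_c⟩⟨χ_c|`. In the Bell basis
`(φ⁺, ψ⁺, φ⁻, ψ⁻)` the two slices are `(-β, -α, β, 0)/√3` and `(α, β, α, 0)/√3`, so nothing reaches
`ψ⁻`, and the Bell matrix of `ρ^{cc}` is a third of the Gram matrix of the slices. Its entries are
`αᾱ ± ββ̄` and `αβ̄ ± βᾱ`, which for the pure input `α|0⟩ + β|1⟩` are `1`, `s_z`, `s_x` and `i s_y`.
-/

open scoped ComplexConjugate ComplexOrder
open Finset Matrix

noncomputable section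

theorem Matrix.conjTranspose_mul_mul_apply {m n R : Type*} [Fintype m] [CommSemiring R]
    [StarRing R] (B : Matrix m n R) (ρ : Matrix m m R) (k l : n) :
    (Bᴴ * ρ * B) k l = ∑ p, ∑ q, conj (B p k) * ρ p q * B q l := by
  simp only [mul_apply, conjTranspose_apply, sum_mul]
  exact Finset.sum_comm

theorem Matrix.conjTranspose_mul_mul_conjTranspose_mul {m n k R : Type*} [Fintype m] [Fintype k]
    [Semiring R] [StarRing R] (A : Matrix m n R) (X : Matrix m k R) :
    Aᴴ * (X * Xᴴ) * A = (Aᴴ * X) * (Aᴴ * X)ᴴ := by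
  simp only [Matrix.mul_assoc, conjTranspose_mul, conjTranspose_conjTranspose]

lemma outer_φvec (α β : ℂ) :
    outer (φvec α β) = !![α * conj α, α * conj β; β * conj α, β * conj β] := by
  ext i j; fin_cases i <;> fin_cases j <;> rfl

lemma blochMat_eq (s : Fin 3 → ℝ) :
    blochMat s = !![(1 + (s 2 : ℂ)) / 2, (s 0 - Complex.I * s 1) / 2;
      (s 0 + Complex.I * s 1) / 2, (1 - s 2) / 2] := by
  ext i j; fin_cases i <;> fin_cases j <;> simp [blochMat, pauliDot, σx, σy, σz] <;> ring

lemma bloch_components_of_outer_eq_blochMat {α β : ℂ} {s : Fin 3 → ℝ}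
    (hs : outer (φvec α β) = blochMat s) :
    α * conj α + β * conj β = 1 ∧ α * conj β + β * conj α = s 0 ∧
      β * conj α - α * conj β = Complex.I * s 1 ∧ α * conj α - β * conj β = s 2 := by
  rw [outer_φvec, blochMat_eq, EmbeddingLike.apply_eq_iff_eq] at hs
  simp only [vecCons_inj] at hs
  obtain ⟨⟨h00, h01, -⟩, ⟨h10, h11, -⟩, -⟩ := hs
  refine ⟨?_, ?_, ?_, ?_⟩
  · linear_combination h00 + h11
  · linear_combination h01 + h10
  · linear_combination h10 - h01
  · linear_combination h00 - h11

def bellMat : Matrix (Fin 2 × Fin 2) (Fin 4) ℂ := Matrix.of fun p k => bell k p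

def cloneAmp (α β : ℂ) : Matrix (Fin 2 × Fin 2) (Fin 2) ℂ :=
  Matrix.of fun p c => cloneOut α β (p.1, p.2, c)

def cloneBellAmp (α β : ℂ) : Matrix (Fin 4) (Fin 2) ℂ := !![-β, α; -α, β; β, α; 0, 0]

lemma rhoCC_eq_cloneAmp_mul_conjTranspose (α β : ℂ) :
    rhoCC α β = cloneAmp α β * (cloneAmp α β)ᴴ :=
  rfl

lemma conjTranspose_bellMat_mul_cloneAmp (α β : ℂ) :
    bellMatᴴ * cloneAmp α β = (Real.sqrt 3 : ℂ)⁻¹ • cloneBellAmp α β := by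
  have h2 : (Real.sqrt 2 : ℂ) ≠ 0 := by norm_num
  have h3 : (Real.sqrt 3 : ℂ) ≠ 0 := by norm_num
  have h22 : (Real.sqrt 2 : ℂ) ^ 2 = 2 := by
    rw [← Complex.ofReal_pow, Real.sq_sqrt (by norm_num)]; norm_num
  have h6 : (Real.sqrt 6 : ℂ) = Real.sqrt 2 * Real.sqrt 3 := by
    rw [← Complex.ofReal_mul, ← Real.sqrt_mul (by norm_num)]; norm_num
  ext k c
  fin_cases k <;> fin_cases c <;>
    simp [bellMat, bell, cloneAmp, cloneBellAmp, cloneOut, out0, out1, mul_apply,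
      Fintype.sum_prod_type, h6] <;>
    field_simp <;> rw [h22] <;> ring

lemma cloneBellAmp_mul_conjTranspose_self (α β : ℂ) :
    cloneBellAmp α β * (cloneBellAmp α β)ᴴ =
      !![α * conj α + β * conj β, α * conj β + β * conj α, α * conj α - β * conj β, 0;
         α * conj β + β * conj α, α * conj α + β * conj β, β * conj α - α * conj β, 0;
         α * conj α - β * conj β, -(β * conj α - α * conj β), α * conj α + β * conj β, 0;
         0, 0, 0, 0] := by
  ext k l
  fin_cases k <;> fin_cases l <;> simp [cloneBellAmp, mul_apply] <;> ring

theorem two_clone_bell_matrix_general (α β : ℂ) (s : Fin 3 → ℝ)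
    (hs : outer (φvec α β) = blochMat s) :
    (Matrix.of fun k l : Fin 4 =>
        ∑ p : Fin 2 × Fin 2, ∑ q : Fin 2 × Fin 2,
          conj (bell k p) * rhoCC α β p q * bell l q) =
      (1/3 : ℂ) •
        !![1, ((s 0 : ℝ) : ℂ), ((s 2 : ℝ) : ℂ), 0;
           ((s 0 : ℝ) : ℂ), 1, Complex.I * ((s 1 : ℝ) : ℂ), 0;
           ((s 2 : ℝ) : ℂ), -Complex.I * ((s 1 : ℝ) : ℂ), 1, 0;
           0, 0, 0, 0] := by
  obtain ⟨hn, hx, hy, hz⟩ := bloch_components_of_outer_eq_blochMat hs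
  have h3 : (Real.sqrt 3 : ℂ)⁻¹ * star (Real.sqrt 3 : ℂ)⁻¹ = 1 / 3 := by
    rw [Complex.star_def, map_inv₀, Complex.conj_ofReal, ← mul_inv, ← Complex.ofReal_mul,
      Real.mul_self_sqrt (by norm_num)]
    norm_num
  calc _ = bellMatᴴ * rhoCC α β * bellMat := by
        ext k l; exact (conjTranspose_mul_mul_apply bellMat (rhoCC α β) k l).symm
    _ = (bellMatᴴ * cloneAmp α β) * (bellMatᴴ * cloneAmp α β)ᴴ := by
      rw [rhoCC_eq_cloneAmp_mul_conjTranspose, conjTranspose_mul_mul_conjTranspose_mul]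
    _ = (1 / 3 : ℂ) • (cloneBellAmp α β * (cloneBellAmp α β)ᴴ) := by
      rw [conjTranspose_bellMat_mul_cloneAmp, conjTranspose_smul, Matrix.smul_mul,
        Matrix.mul_smul, smul_smul, h3]
    _ = _ := by rw [cloneBellAmp_mul_conjTranspose_self, hn, hx, hy, hz, ← neg_mul]

/-- the two-clone reduced state in the Bell basis {φ⁺, ψ⁺, φ⁻, ψ⁻} is
(1/3)[[1, s_x, s_z, 0], [s_x, 1, i s_y, 0], [s_z, −i s_y, 1, 0], [0,0,0,0]];
in particular it has no support on ψ⁻. -/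
theorem two_clone_bell_matrix (α β : ℂ) (s : Fin 3 → ℝ)
    (hnorm : Complex.normSq α + Complex.normSq β = 1)
    (hs : outer (φvec α β) = blochMat s) :
    (Matrix.of fun k l : Fin 4 =>
        ∑ p : Fin 2 × Fin 2, ∑ q : Fin 2 × Fin 2,
          conj (bell k p) * rhoCC α β p q * bell l q) =
      (1/3 : ℂ) •
        !![1, ((s 0 : ℝ) : ℂ), ((s 2 : ℝ) : ℂ), 0;
           ((s 0 : ℝ) : ℂ), 1, Complex.I * ((s 1 : ℝ) : ℂ), 0;
           ((s 2 : ℝ) : ℂ), -Complex.I * ((s 1 : ℝ) : ℂ), 1, 0;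
           0, 0, 0, 0] :=
  two_clone_bell_matrix_general α β s hs
end
end

section
/- For any operator F on the two-clone output space, the effective POVM element on the input qubit corresponding to F ⊗ I_ancilla equals (2/3)·Tr_c(P F P), where P is the projector onto the symmetric subspace of the two clones and Tr_c is the partial trace over one clone. In particular, for F supported on the symmetric subspace, E = (2/3) Tr_c(F). -/
open scoped ComplexConjugate ComplexOrder
open Finset Matrix

noncomputable section

/-- Partial trace over one (the first) clone. -/
def trFirst (G : Matrix (Fin 2 × Fin 2) (Fin 2 × Fin 2) ℂ) : Matrix (Fin 2) (Fin 2) ℂ :=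
  Matrix.of fun i j => ∑ b : Fin 2, G (b, i) (b, j)

/-!
The optimal cloner realises Werner's formula: the clones' reduced output on `|j⟩⟨i|` is
`(2/3) P (1 ⊗ |j⟩⟨i|) P`, where `P = (1 + SWAP)/2` is the symmetric projector. The effective element
is the Heisenberg-picture dual of this map, so by cyclicity of the trace
`E_ij = tr (F · (2/3) P (1 ⊗ |j⟩⟨i|) P) = (2/3) tr (P F P (1 ⊗ |j⟩⟨i|)) = (2/3) Tr_c(P F P)_ij`.
-/

def swapMatrix (n R : Type*) [DecidableEq n] [Zero R] [One R] : Matrix (n × n) (n × n) R :=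
  Equiv.Perm.permMatrix R (Equiv.prodComm n n)

section swap

variable {n R : Type*} [Fintype n] [DecidableEq n] [Semiring R]

lemma swapMatrix_mul (M : Matrix (n × n) (n × n) R) :
    swapMatrix n R * M = M.submatrix Prod.swap id :=
  PEquiv.toMatrix_toPEquiv_mul (Equiv.prodComm n n) M

lemma mul_swapMatrix (M : Matrix (n × n) (n × n) R) :
    M * swapMatrix n R = M.submatrix id Prod.swap :=
  PEquiv.mul_toMatrix_toPEquiv M (Equiv.prodComm n n)

lemma one_add_swapMatrix_mul_mul_apply (M : Matrix (n × n) (n × n) R) (p q : n × n) :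
    ((1 + swapMatrix n R) * M * (1 + swapMatrix n R)) p q =
      M p q + M p.swap q + M p q.swap + M p.swap q.swap := by
  simp only [Matrix.add_mul, Matrix.mul_add, Matrix.one_mul, Matrix.mul_one, swapMatrix_mul,
    mul_swapMatrix, Matrix.add_apply, submatrix_apply, id_eq]
  abel

end swap

lemma symProj_eq : symProj = (1 / 2 : ℂ) • (1 + swapMatrix (Fin 2) ℂ) := by
  have h : ((Real.sqrt 2 : ℂ))⁻¹ * ((Real.sqrt 2 : ℂ))⁻¹ = 1 / 2 := by
    rw [← mul_inv, ← Complex.ofReal_mul, Real.mul_self_sqrt zero_le_two]; norm_num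
  ext ⟨a, b⟩ ⟨c, d⟩
  fin_cases a <;> fin_cases b <;> fin_cases c <;> fin_cases d <;>
    simp [symProj, swapMatrix, bell, one_apply, h] <;> norm_num

/-- `Tr_a U(|j⟩⟨i| ⊗ |00⟩⟨00|_{ba}) U†`, the clones' share of the cloner's output on `|j⟩⟨i|`. -/
def clonesOutput (i j : Fin 2) : Matrix (Fin 2 × Fin 2) (Fin 2 × Fin 2) ℂ :=
  of fun x y => ∑ c : Fin 2, Uout j (x.1, x.2, c) * conj (Uout i (y.1, y.2, c))

lemma sqrt_two_thirds : Real.sqrt (2 / 3) = 2 * (1 / Real.sqrt 6) := by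
  rw [Real.sqrt_eq_iff_mul_self_eq_of_pos (by positivity)]
  field_simp
  rw [Real.sq_sqrt (by norm_num)]
  norm_num

lemma clonesOutput_eq (i j : Fin 2) :
    clonesOutput i j = (2 / 3 : ℂ) • (symProj * kron2 1 (single j i 1) * symProj) := by
  have hs : ((1 / Real.sqrt 6 : ℝ) : ℂ) ^ 2 = 1 / 6 := by
    rw [← Complex.ofReal_pow, div_pow, Real.sq_sqrt (by norm_num)]; norm_num
  rw [symProj_eq, Matrix.smul_mul, Matrix.smul_mul, Matrix.mul_smul, smul_smul, smul_smul]
  ext ⟨a, b⟩ ⟨c, d⟩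
  rw [Matrix.smul_apply, one_add_swapMatrix_mul_mul_apply]
  -- every amplitude of the cloner is an integer multiple of `s = 1/√6`
  fin_cases i <;> fin_cases j <;>
  simp only [clonesOutput, of_apply, Uout, Fin.zero_eta, Fin.mk_one, cons_val_zero, cons_val_one,
    out0, out1, sqrt_two_thirds, Complex.ofReal_mul, Complex.ofReal_ofNat, Complex.conj_ofReal,
    map_neg, map_mul, map_ofNat, apply_ite (starRingEnd ℂ), map_zero] <;>
  generalize ((1 / Real.sqrt 6 : ℝ) : ℂ) = s at hs ⊢ <;>
  fin_cases a <;> fin_cases b <;> fin_cases c <;> fin_cases d <;>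
    simp [kron2, one_apply, single] <;> ring_nf <;> simp only [hs] <;> norm_num

lemma effOf_extCC_apply (F : Matrix (Fin 2 × Fin 2) (Fin 2 × Fin 2) ℂ) (i j : Fin 2) :
    effOf (extCC F) i j = trace (F * clonesOutput i j) := by
  simp only [effOf, extCC, clonesOutput, Matrix.trace, Matrix.diag_apply, Matrix.mul_apply,
    of_apply, Fintype.sum_prod_type]
  simp only [mul_ite, mul_one, mul_zero, ite_mul, zero_mul, sum_ite_eq, mem_univ, ↓reduceIte,
    Fin.sum_univ_two, Fin.isValue]
  ring

lemma trFirst_apply_eq_trace (G : Matrix (Fin 2 × Fin 2) (Fin 2 × Fin 2) ℂ) (i j : Fin 2) :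
    trFirst G i j = trace (G * kron2 1 (single j i 1)) := by
  fin_cases i <;> fin_cases j <;>
    simp [trFirst, kron2, trace, mul_apply, Fintype.sum_prod_type, Fin.sum_univ_two, one_apply, single]

lemma effOf_extCC (F : Matrix (Fin 2 × Fin 2) (Fin 2 × Fin 2) ℂ) :
    effOf (extCC F) = (2 / 3 : ℂ) • trFirst (symProj * F * symProj) := by
  ext i j
  rw [effOf_extCC_apply, clonesOutput_eq, Matrix.mul_smul, trace_smul, Matrix.smul_apply,
    trFirst_apply_eq_trace]
  congr 1
  simp only [Matrix.mul_assoc]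
  rw [trace_mul_comm symProj, Matrix.mul_assoc, Matrix.mul_assoc]

/-- for any F on the two clones, the effective element of F ⊗ I_a equals
(2/3)·Tr_c(P F P), P the symmetric projector; for F supported on the symmetric
subspace, E = (2/3)·Tr_c(F). -/
theorem two_clone_effective_formula :
    (∀ F : Matrix (Fin 2 × Fin 2) (Fin 2 × Fin 2) ℂ,
      effOf (extCC F) = (2/3 : ℂ) • trFirst (symProj * F * symProj)) ∧
    (∀ F : Matrix (Fin 2 × Fin 2) (Fin 2 × Fin 2) ℂ,
      symProj * F * symProj = F → effOf (extCC F) = (2/3 : ℂ) • trFirst F) :=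
  ⟨effOf_extCC, fun F hF => by rw [effOf_extCC, hF]⟩
end
end

section
/- For any single-qubit pure state |χ⟩ and any 0 ≤ p ≤ 1, the measurement element F = p|χ⟩⟨χ| ⊗ |χ⟩⟨χ| on the two clones (tensored with the identity on the ancilla) yields the sharp effective POVM element E = (2/3) p |χ⟩⟨χ| on the input of the universal 1→2 cloner. -/
open scoped ComplexConjugate ComplexOrder
open Finset Matrix

noncomputable section

/-! The effective element of a product measurement `|u⟩⟨u| ⊗ |v⟩⟨v| ⊗ I` is a sum over the ancilla
index `c` of rank-one operators `|w_c⟩⟨w_c|`, where `w_c j = ⟨U(|j⟩|00⟩) | u v c⟩`. For `u = v = χ`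
the covariance of the cloner gives `w_c = √(2/3) χ⊥_c • χ` with `χ⊥ = (-χ₁, χ₀)`, and summing
`|χ⊥_c|² = ‖χ‖²` over `c` yields `E = (2/3) ‖χ‖² |χ⟩⟨χ|`. -/

def cloneOverlap (u v : Fin 2 → ℂ) (c : Fin 2) : Fin 2 → ℂ :=
  fun j => ∑ a, ∑ b, u a * v b * conj (Uout j (a, b, c))

theorem effOf_smul (c : ℂ) (F : Matrix I3 I3 ℂ) : effOf (c • F) = c • effOf F := by
  ext i j
  simp only [effOf, of_apply, Matrix.smul_apply, smul_eq_mul, Finset.mul_sum]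
  exact Finset.sum_congr rfl fun _ _ => Finset.sum_congr rfl fun _ _ => by ring

theorem extCC_smul (c : ℂ) (F : Matrix (Fin 2 × Fin 2) (Fin 2 × Fin 2) ℂ) :
    extCC (c • F) = c • extCC F := by
  ext p q
  simp only [extCC, of_apply, Matrix.smul_apply, smul_eq_mul, mul_assoc]

theorem outer_smul (a : ℂ) (v : Fin 2 → ℂ) :
    outer (a • v) = (Complex.normSq a : ℂ) • outer v := by
  ext i j
  simp only [outer, of_apply, Pi.smul_apply, smul_eq_mul, map_mul, Matrix.smul_apply,
    Complex.normSq_eq_conj_mul_self]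
  ring

theorem effOf_extCC_kron2_outer (u v : Fin 2 → ℂ) :
    effOf (extCC (kron2 (outer u) (outer v))) = ∑ c, outer (cloneOverlap u v c) := by
  ext i j
  simp only [effOf, extCC, kron2, outer, cloneOverlap, of_apply, Matrix.sum_apply, map_sum,
    map_mul, Complex.conj_conj, Fintype.sum_prod_type, Finset.sum_mul, Finset.mul_sum, mul_ite,
    mul_one, mul_zero]
  simp [Fin.sum_univ_two]
  ring

theorem one_div_sqrt_six : 1 / Real.sqrt 6 = Real.sqrt (2 / 3) / 2 := by
  rw [eq_div_iff two_ne_zero, div_mul_eq_mul_div, one_mul, div_eq_iff (by positivity),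
    ← Real.sqrt_mul (by norm_num)]
  norm_num

theorem cloneOverlap_self (χ : Fin 2 → ℂ) (c : Fin 2) :
    cloneOverlap χ χ c = ((Real.sqrt (2 / 3) : ℂ) * ![-χ 1, χ 0] c) • χ := by
  funext j
  fin_cases c <;> fin_cases j <;> simp [cloneOverlap, Uout, Fin.sum_univ_two] <;>
    simp only [out0, out1, one_div_sqrt_six] <;> simp [map_ofNat] <;> ring

theorem effOf_extCC_kron2_outer_self (χ : Fin 2 → ℂ) :
    effOf (extCC (kron2 (outer χ) (outer χ))) =
      ((2 / 3 : ℂ) * ∑ i, (Complex.normSq (χ i) : ℂ)) • outer χ := by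
  simp_rw [effOf_extCC_kron2_outer, cloneOverlap_self, outer_smul, ← Finset.sum_smul]
  congr 1
  simp [Fin.sum_univ_two, Complex.normSq_mul, Complex.normSq_ofReal, ← sq]
  ring

theorem product_measurement_sharp_general (χ : Fin 2 → ℂ)
    (hχ : ∑ i : Fin 2, Complex.normSq (χ i) = 1)
    (p : ℝ) :
    effOf (extCC ((p : ℂ) • kron2 (outer χ) (outer χ))) =
      ((2/3 : ℂ) * (p : ℂ)) • outer χ := by
  have hχ' : ∑ i, (Complex.normSq (χ i) : ℂ) = 1 := by exact_mod_cast hχ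
  rw [extCC_smul, effOf_smul, effOf_extCC_kron2_outer_self, hχ', smul_smul]
  ring_nf

/-- F = p|χ⟩⟨χ| ⊗ |χ⟩⟨χ| on the two clones gives the sharp effective
element E = (2/3)p |χ⟩⟨χ| on the input. -/
theorem product_measurement_sharp (χ : Fin 2 → ℂ)
    (hχ : ∑ i : Fin 2, Complex.normSq (χ i) = 1)
    (p : ℝ) (hp0 : 0 ≤ p) (hp1 : p ≤ 1) :
    effOf (extCC ((p : ℂ) • kron2 (outer χ) (outer χ))) =
      ((2/3 : ℂ) * (p : ℂ)) • outer χ :=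
  product_measurement_sharp_general χ hχ p
end
end

section
/- Let n_1,…,n_4 be four unit vectors in ℝ³ pointing to the vertices of a regular tetrahedron (so ∑_i n_i = 0 and n_i·n_j = −1/3 for i≠j). Then the four operators F_i = (3/4)|n_i⟩⟨n_i| ⊗ |n_i⟩⟨n_i| sum to the projector onto the symmetric subspace of ℂ²⊗ℂ², and the corresponding effective POVM on the input of the universal 1→2 cloner is {(1/2)|n_i⟩⟨n_i|}_{i=1..4}, a complete rank-one POVM on ℂ². -/
open scoped ComplexConjugate ComplexOrder
open Finset Matrix

noncomputable section

lemma tetra_moments (n : Fin 4 → Fin 3 → ℝ)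
    (hunit : ∀ i, (n i 0)^2 + (n i 1)^2 + (n i 2)^2 = 1)
    (hsum : ∀ k, ∑ i : Fin 4, n i k = 0)
    (hdot : ∀ i j, i ≠ j → n i 0 * n j 0 + n i 1 * n j 1 + n i 2 * n j 2 = -(1/3)) :
    ∀ k l : Fin 3, ∑ i : Fin 4, n i k * n i l = if k = l then 4/3 else 0 := by
  intro k l
  classical
  have hsum4 : ∀ k : Fin 3, n 0 k + n 1 k + n 2 k + n 3 k = 0 := by
    intro k; have := hsum k; rwa [Fin.sum_univ_four] at this
  set A : Matrix (Fin 3) (Fin 3) ℝ := Matrix.of (fun j m => n j.castSucc m) with hA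
  have hAA : A * Aᵀ = !![1, -(1/3), -(1/3); -(1/3), 1, -(1/3); -(1/3), -(1/3), 1] := by
    ext j m
    fin_cases j <;> fin_cases m <;>
      simp [hA, Matrix.mul_apply, Fin.sum_univ_three, Matrix.transpose_apply, Matrix.vecHead, Matrix.vecTail, Function.comp,
        show (Fin.castSucc 0 : Fin 4) = 0 from rfl, show (Fin.castSucc 1 : Fin 4) = 1 from rfl,
        show (Fin.castSucc 2 : Fin 4) = 2 from rfl] <;>
      first
        | linear_combination hunit 0
        | linear_combination hunit 1
        | linear_combination hunit 2
        | linear_combination hdot 0 1 (by decide)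
        | linear_combination hdot 0 2 (by decide)
        | linear_combination hdot 1 0 (by decide)
        | linear_combination hdot 1 2 (by decide)
        | linear_combination hdot 2 0 (by decide)
        | linear_combination hdot 2 1 (by decide)
  have hdet : A.det * A.det = 16/27 := by
    have h1 : (A * Aᵀ).det = 16/27 := by rw [hAA]; simp [Matrix.det_fin_three]; norm_num
    rwa [Matrix.det_mul, Matrix.det_transpose] at h1
  have hinj : Function.Injective A.mulVec :=
    Matrix.mulVec_injective_iff_isUnit.mpr ((Matrix.isUnit_iff_isUnit_det A).mpr
      (isUnit_iff_ne_zero.mpr (by intro h; rw [h] at hdet; norm_num at hdet)))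
  set v : Fin 3 → ℝ := fun m => ∑ i : Fin 4, n i k * n i m with hv
  have hmv : A.mulVec v = A.mulVec (((4/3 : ℝ) • (Pi.single k 1 : Fin 3 → ℝ))) := by
    have hrhs : ∀ j, A.mulVec (((4/3 : ℝ) • (Pi.single k 1 : Fin 3 → ℝ))) j = (4/3) * n j.castSucc k := by
      intro j
      simp [Matrix.mulVec, dotProduct, Pi.single_apply, mul_ite, hA]
      ring
    ext j
    rw [hrhs]
    fin_cases j <;>
      simp [hA, Matrix.mulVec, dotProduct, Fin.sum_univ_three, hv, Fin.sum_univ_four,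
        show (Fin.castSucc 0 : Fin 4) = 0 from rfl, show (Fin.castSucc 1 : Fin 4) = 1 from rfl,
        show (Fin.castSucc 2 : Fin 4) = 2 from rfl] <;>
      first
        | linear_combination (n 0 k) * hunit 0 + (n 1 k) * hdot 0 1 (by decide)
            + (n 2 k) * hdot 0 2 (by decide) + (n 3 k) * hdot 0 3 (by decide) - (1/3) * hsum4 k
        | linear_combination (n 0 k) * hdot 1 0 (by decide) + (n 1 k) * hunit 1
            + (n 2 k) * hdot 1 2 (by decide) + (n 3 k) * hdot 1 3 (by decide) - (1/3) * hsum4 k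
        | linear_combination (n 0 k) * hdot 2 0 (by decide) + (n 1 k) * hdot 2 1 (by decide)
            + (n 2 k) * hunit 2 + (n 3 k) * hdot 2 3 (by decide) - (1/3) * hsum4 k
  have hvv : v = ((4/3 : ℝ) • (Pi.single k 1 : Fin 3 → ℝ)) := hinj hmv
  have := congrFun hvv l
  simp only [hv, Pi.smul_apply, Pi.single_apply, smul_eq_mul] at this
  rw [this]
  by_cases h : k = l <;> simp [h, eq_comm]

set_option maxHeartbeats 4000000 in
/-- for four unit Bloch vectors forming a regular tetrahedron, the operators
(3/4)|n_i n_i⟩⟨n_i n_i| sum to the symmetric projector, with effective POVM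
{(1/2)|n_i⟩⟨n_i|} — a complete rank-one POVM on the input. -/
theorem tetrahedron_povm (n : Fin 4 → Fin 3 → ℝ)
    (hunit : ∀ i, (n i 0)^2 + (n i 1)^2 + (n i 2)^2 = 1)
    (hsum : ∀ k, ∑ i : Fin 4, n i k = 0)
    (hdot : ∀ i j, i ≠ j → n i 0 * n j 0 + n i 1 * n j 1 + n i 2 * n j 2 = -(1/3)) :
    (∑ i : Fin 4, (3/4 : ℂ) • kron2 (blochMat (n i)) (blochMat (n i)) = symProj) ∧
    (∀ i : Fin 4,
      effOf (extCC ((3/4 : ℂ) • kron2 (blochMat (n i)) (blochMat (n i)))) =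
        (1/2 : ℂ) • blochMat (n i)) ∧
    (∑ i : Fin 4, (1/2 : ℂ) • blochMat (n i) = 1) ∧
    (∀ i : Fin 4, ((1/2 : ℂ) • blochMat (n i)).rank = 1) := by
  have hsum4 : ∀ k : Fin 3, n 0 k + n 1 k + n 2 k + n 3 k = 0 := by
    intro k; have := hsum k; rwa [Fin.sum_univ_four] at this
  have hSe : ∀ k l : Fin 3, n 0 k * n 0 l + n 1 k * n 1 l + n 2 k * n 2 l + n 3 k * n 3 l
      = if k = l then 4/3 else 0 := by
    intro k l
    have := tetra_moments n hunit hsum hdot k l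
    rwa [Fin.sum_univ_four] at this
  refine ⟨?_, ?_, ?_, ?_⟩
  · have h2 : Real.sqrt 2 * Real.sqrt 2 = 2 := Real.mul_self_sqrt (by norm_num)
    have e00 := hSe 0 0; have e11 := hSe 1 1; have e22 := hSe 2 2
    have e01 := hSe 0 1; have e02 := hSe 0 2; have e12 := hSe 1 2
    norm_num [Fin.ext_iff] at e00 e11 e22 e01 e02 e12
    ext ⟨a, b⟩ ⟨c, d⟩
    fin_cases a <;> fin_cases b <;> fin_cases c <;> fin_cases d <;>
      simp [blochMat, pauliDot, σx, σy, σz, kron2, symProj, bell, Fin.sum_univ_four,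
        Matrix.one_apply, Matrix.vecHead, Matrix.vecTail, Complex.ext_iff, Prod.ext_iff] <;>
      (try constructor) <;>
      linarith [hsum4 0, hsum4 1, hsum4 2, e00, e11, e22, e01, e02, e12, h2]
  · intro i
    have hu := hunit i
    have s3pos : (0:ℝ) < Real.sqrt 3 := Real.sqrt_pos.mpr (by norm_num)
    have a2 : Real.sqrt 2 * Real.sqrt 2 = 2 := Real.mul_self_sqrt (by norm_num)
    have a3 : (Real.sqrt 3)⁻¹ * (Real.sqrt 3)⁻¹ = 1/3 := by
      rw [← mul_inv, Real.mul_self_sqrt (by norm_num)]; norm_num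
    have c1 : Real.sqrt 2 * Real.sqrt 6 = 2 * Real.sqrt 3 := by
      rw [← Real.sqrt_mul (by norm_num), show (2*6:ℝ) = 4*3 by norm_num,
        Real.sqrt_mul (by norm_num), show Real.sqrt 4 = 2 by
          rw [show (4:ℝ) = 2^2 by norm_num, Real.sqrt_sq (by norm_num)]]
    have d3 : Real.sqrt 3 * (Real.sqrt 3)⁻¹ = 1 := mul_inv_cancel₀ s3pos.ne'
    have r3 : ∀ t : ℝ, Real.sqrt 6 * Real.sqrt 6 * t = 6 * t := by
      intro t; rw [Real.mul_self_sqrt (by norm_num)]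
    have r4 : ∀ t : ℝ, Real.sqrt 2 * (Real.sqrt 3)⁻¹ * Real.sqrt 6 * t = 2 * t := by
      intro t; linear_combination ((Real.sqrt 3)⁻¹ * t) * c1 + (2*t) * d3
    have r5 : ∀ t : ℝ, Real.sqrt 2 * Real.sqrt 2 * ((Real.sqrt 3)⁻¹ * (Real.sqrt 3)⁻¹) * t
        = 2/3 * t := by
      intro t
      linear_combination ((Real.sqrt 3)⁻¹ * (Real.sqrt 3)⁻¹ * t) * a2 + (2*t) * a3
    ext a b
    fin_cases a <;> fin_cases b <;>
      simp [effOf, extCC, kron2, blochMat, pauliDot, σx, σy, σz, Uout, out0, out1,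
        Fintype.sum_prod_type, Fin.sum_univ_two, Matrix.vecHead, Matrix.vecTail,
        Complex.ext_iff, Prod.ext_iff] <;>
      (try constructor) <;> (try ring_nf) <;>
      linarith [hu,
        r3 1, r3 (n i 0), r3 (n i 1), r3 (n i 2), r3 (n i 0*n i 0), r3 (n i 1*n i 1),
        r3 (n i 2*n i 2), r3 (n i 0*n i 1), r3 (n i 0*n i 2), r3 (n i 1*n i 2),
        r4 1, r4 (n i 0), r4 (n i 1), r4 (n i 2), r4 (n i 0*n i 0), r4 (n i 1*n i 1),
        r4 (n i 2*n i 2), r4 (n i 0*n i 1), r4 (n i 0*n i 2), r4 (n i 1*n i 2),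
        r5 1, r5 (n i 0), r5 (n i 1), r5 (n i 2), r5 (n i 0*n i 0), r5 (n i 1*n i 1),
        r5 (n i 2*n i 2), r5 (n i 0*n i 1), r5 (n i 0*n i 2), r5 (n i 1*n i 2)]
  · ext a b
    fin_cases a <;> fin_cases b <;>
      simp [blochMat, pauliDot, σx, σy, σz, Fin.sum_univ_four, Matrix.one_apply,
        Matrix.vecHead, Matrix.vecTail, Complex.ext_iff] <;>
      (try constructor) <;> linarith [hsum4 0, hsum4 1, hsum4 2]
  · intro i
    set M := (1/2 : ℂ) • blochMat (n i) with hM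
    have hent : ∀ a b : Fin 2, M a b =
        (1/4 : ℂ) * (![![1 + (n i 2 : ℂ), (n i 0 : ℂ) - Complex.I * (n i 1 : ℂ)],
          ![(n i 0 : ℂ) + Complex.I * (n i 1 : ℂ), 1 - (n i 2 : ℂ)]] a b) := by
      intro a b
      fin_cases a <;> fin_cases b <;>
        simp [hM, blochMat, pauliDot, σx, σy, σz, Matrix.one_apply, Matrix.vecHead, Matrix.vecTail] <;>
        ring
    -- rank ≥ 1 : M ≠ 0 in the sense that some column is nonzero
    have hub : ((n i 0 : ℂ))^2 + (n i 1 : ℂ)^2 + (n i 2 : ℂ)^2 = 1 := by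
      have := hunit i; exact_mod_cast this
    have hxy : ((n i 0 : ℂ) + Complex.I * (n i 1 : ℂ)) * ((n i 0 : ℂ) - Complex.I * (n i 1 : ℂ))
        = 1 - ((n i 2 : ℂ))^2 := by
      linear_combination hub - ((n i 1 : ℂ))^2 * Complex.I_sq
    have hle : M.rank ≤ 1 := by
      by_cases hz : (n i 2 : ℝ) = -1
      · have hx : n i 0 = 0 ∧ n i 1 = 0 := by
          constructor <;> nlinarith [hunit i, sq_nonneg (n i 0), sq_nonneg (n i 1)]
        have hfac : M = (!![(0:ℂ); 1] : Matrix (Fin 2) (Fin 1) ℂ) * (!![(0:ℂ), 1/2] : Matrix (Fin 1) (Fin 2) ℂ) := by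
          ext a b
          rw [hent a b]
          fin_cases a <;> fin_cases b <;>
            simp [Matrix.mul_apply, hx.1, hx.2, hz, Matrix.vecHead, Matrix.vecTail] <;> norm_num
        calc M.rank = _ := by rw [hfac]
          _ ≤ (!![(0:ℂ), 1/2] : Matrix (Fin 1) (Fin 2) ℂ).rank := Matrix.rank_mul_le_right _ _
          _ ≤ 1 := by simpa using Matrix.rank_le_card_height (!![(0:ℂ), 1/2] : Matrix (Fin 1) (Fin 2) ℂ)
      · have hz' : (1 : ℂ) + (n i 2 : ℂ) ≠ 0 := by
          intro h
          apply hz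
          have : ((n i 2 : ℝ) : ℂ) = ((-1 : ℝ) : ℂ) := by push_cast; linear_combination h
          exact_mod_cast this
        have hfac : M = (!![(1:ℂ); ((n i 0 : ℂ) + Complex.I * (n i 1 : ℂ))/(1 + (n i 2:ℂ))] : Matrix (Fin 2) (Fin 1) ℂ)
            * (!![(1 + (n i 2:ℂ))/4, ((n i 0 : ℂ) - Complex.I * (n i 1 : ℂ))/4] : Matrix (Fin 1) (Fin 2) ℂ) := by
          ext a b
          rw [hent a b]
          fin_cases a <;> fin_cases b <;>
            simp [Matrix.mul_apply, Matrix.vecHead, Matrix.vecTail] <;>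
            field_simp
          all_goals linear_combination -(1:ℂ)*hxy
        calc M.rank = _ := by rw [hfac]
          _ ≤ (!![(1 + (n i 2:ℂ))/4, ((n i 0 : ℂ) - Complex.I * (n i 1 : ℂ))/4] : Matrix (Fin 1) (Fin 2) ℂ).rank := Matrix.rank_mul_le_right _ _
          _ ≤ 1 := (Matrix.rank_le_card_height _).trans_eq (Fintype.card_fin 1)
    have hge : 1 ≤ M.rank := by
      rw [Nat.one_le_iff_ne_zero]
      intro h0
      rw [Matrix.rank] at h0
      have hbot : LinearMap.range M.mulVecLin = ⊥ := Submodule.finrank_eq_zero.mp h0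
      have hcol : ∀ j, M.mulVec (Pi.single j 1) = 0 := by
        intro j
        have : M.mulVec (Pi.single j 1) ∈ LinearMap.range M.mulVecLin :=
          ⟨Pi.single j 1, by simp [Matrix.mulVecLin]⟩
        rw [hbot] at this
        simpa using this
      have h00 : M 0 0 = 0 := by
        have := congrFun (hcol 0) 0
        simpa using this
      have h11 : M 1 1 = 0 := by
        have := congrFun (hcol 1) 1
        simpa using this
      rw [hent 0 0] at h00; rw [hent 1 1] at h11
      simp at h00 h11
      have : (4:ℂ) * ((1/4 : ℂ) * (1 + (n i 2:ℂ))) + 4 * ((1/4:ℂ) * (1 - (n i 2:ℂ))) = 2 := by ring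
      rw [h00, h11] at this
      norm_num at this
    omega
end
end

section
/- The universal 1→2 cloner satisfies the covariance property U(V ⊗ I ⊗ I)|000⟩ = (V ⊗ V ⊗ V)U|000⟩ for every V ∈ SU(2), where the first tensor factor on the left is the input qubit. -/
open scoped ComplexConjugate ComplexOrder
open Finset Matrix

noncomputable section

/-!
Write `ε = |01⟩ - |10⟩` for the (unnormalised) singlet. The cloner sends `|w⟩|00⟩` to
`(ε₁₃ ⊗ w₂ + ε₂₃ ⊗ w₁) / √6`, the subscripts naming the tensor factors. Since
`(V ⊗ V) ε = det V • ε`, applying `V ⊗ V ⊗ V` to this output gives `det V` times the output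
for the input `V w`, which is the covariance identity when `det V = 1`.
-/

open scoped Kronecker

section Kronecker

variable {R m n : Type*} [CommSemiring R] [Fintype n]

theorem kronecker_mulVec_pair_one_three (V : Matrix m n R) (u : Matrix n n R) (w : n → R) :
    (V ⊗ₖ (V ⊗ₖ V)) *ᵥ (fun q => u q.1 q.2.2 * w q.2.1) =
      fun p => (V * u * Vᵀ) p.1 p.2.2 * (V *ᵥ w) p.2.1 := by
  ext ⟨a, b, c⟩
  simp only [mulVec, dotProduct, kroneckerMap_apply, mul_apply, transpose_apply,
    Fintype.sum_prod_type, Finset.sum_mul, Finset.mul_sum]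
  rw [Finset.sum_comm]
  refine Finset.sum_congr rfl fun _ _ => ?_
  rw [Finset.sum_comm]
  exact Finset.sum_congr rfl fun _ _ => Finset.sum_congr rfl fun _ _ => by ring

theorem kronecker_mulVec_pair_two_three (V : Matrix m n R) (u : Matrix n n R) (w : n → R) :
    (V ⊗ₖ (V ⊗ₖ V)) *ᵥ (fun q => u q.2.1 q.2.2 * w q.1) =
      fun p => (V * u * Vᵀ) p.2.1 p.2.2 * (V *ᵥ w) p.1 := by
  ext ⟨a, b, c⟩
  simp only [mulVec, dotProduct, kroneckerMap_apply, mul_apply, transpose_apply,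
    Fintype.sum_prod_type, Finset.sum_mul, Finset.mul_sum]
  refine Finset.sum_congr rfl fun _ _ => ?_
  rw [Finset.sum_comm]
  exact Finset.sum_congr rfl fun _ _ => Finset.sum_congr rfl fun _ _ => by ring

end Kronecker

def leviCivita2 {R : Type*} [CommRing R] : Matrix (Fin 2) (Fin 2) R := !![0, 1; -1, 0]

theorem mul_leviCivita2_mul_transpose {R : Type*} [CommRing R] (V : Matrix (Fin 2) (Fin 2) R) :
    V * leviCivita2 * Vᵀ = V.det • leviCivita2 := by
  ext i j
  fin_cases i <;> fin_cases j <;>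
    simp [leviCivita2, det_fin_two, mul_apply, Fin.sum_univ_two] <;> ring

def cloneOutSinglet (w : Fin 2 → ℂ) : I3 → ℂ :=
  ((Real.sqrt 6 : ℝ) : ℂ)⁻¹ •
    ((fun q => leviCivita2 q.1 q.2.2 * w q.2.1) + fun q => leviCivita2 q.2.1 q.2.2 * w q.1)

theorem kronecker_mulVec_cloneOutSinglet (V : Matrix (Fin 2) (Fin 2) ℂ) (w : Fin 2 → ℂ) :
    (V ⊗ₖ (V ⊗ₖ V)) *ᵥ cloneOutSinglet w = V.det • cloneOutSinglet (V *ᵥ w) := by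
  rw [cloneOutSinglet, cloneOutSinglet, mulVec_smul, mulVec_add,
    kronecker_mulVec_pair_one_three, kronecker_mulVec_pair_two_three,
    mul_leviCivita2_mul_transpose, smul_comm]
  congr 1
  ext p
  simp only [Pi.add_apply, Pi.smul_apply, Matrix.smul_apply, smul_eq_mul]
  ring

theorem sqrt_two_div_three : Real.sqrt (2 / 3) = 2 / Real.sqrt 6 := by
  rw [show (2 / 3 : ℝ) = 4 / 6 by norm_num, Real.sqrt_div' 4 (by norm_num),
    show (4 : ℝ) = 2 ^ 2 by norm_num, Real.sqrt_sq (by norm_num)]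

theorem cloneOut_eq_cloneOutSinglet (α β : ℂ) : cloneOut α β = cloneOutSinglet ![α, β] := by
  ext ⟨a, b, c⟩
  simp only [cloneOut, out0, out1, cloneOutSinglet, sqrt_two_div_three]
  fin_cases a <;> fin_cases b <;> fin_cases c <;> simp [leviCivita2] <;> ring

/-- covariance of the cloner, U(V ⊗ I ⊗ I)|000⟩ = (V ⊗ V ⊗ V)U|000⟩
for every V ∈ SU(2).  Here (V ⊗ I ⊗ I)|000⟩ = V₀₀|000⟩ + V₁₀|100⟩, so the left-hand
side is V₀₀·U|000⟩ + V₁₀·U|100⟩. -/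
theorem cloner_covariance (V : Matrix (Fin 2) (Fin 2) ℂ)
    (hV : V ∈ Matrix.specialUnitaryGroup (Fin 2) ℂ) :
    (fun p : I3 => V 0 0 * out0 p + V 1 0 * out1 p) =
      fun p : I3 => ∑ q : I3, V p.1 q.1 * V p.2.1 q.2.1 * V p.2.2 q.2.2 * out0 q := by
  have hdet : V.det = 1 := (mem_specialUnitaryGroup_iff.1 hV).2
  have hcol : V *ᵥ ![1, 0] = ![V 0 0, V 1 0] := by
    ext i; fin_cases i <;> simp [mulVec, dotProduct, Fin.sum_univ_two]
  calc (fun p : I3 => V 0 0 * out0 p + V 1 0 * out1 p)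
      = V.det • cloneOutSinglet (V *ᵥ ![1, 0]) := by
        rw [hdet, one_smul, hcol, ← cloneOut_eq_cloneOutSinglet]; rfl
    _ = (V ⊗ₖ (V ⊗ₖ V)) *ᵥ cloneOut 1 0 := by
        rw [cloneOut_eq_cloneOutSinglet, kronecker_mulVec_cloneOutSinglet]
    _ = _ := by
        ext p
        simp only [mulVec, dotProduct, kroneckerMap_apply, cloneOut, one_mul, zero_mul, add_zero,
          mul_assoc]
end
end

section
/- For arbitrary input |φ⟩ = α|0⟩ + β|1⟩, the output of the universal 1→2 cloner can be written as U|φ⟩|00⟩ = (1/√3)|φ⁺⟩(−β|0⟩+α|1⟩) + (1/√3)|φ⁻⟩(β|0⟩+α|1⟩) + (1/√3)|ψ⁺⟩(−α|0⟩+β|1⟩), where the Bell states are on the two clones and the last qubit is the ancilla. Consequently, a projective measurement on the two clones in the Bell basis yields each of the three symmetric Bell outcomes with probability 1/3, and in each case there is a unitary W (iσ_y, σ_x, −σ_z respectively) such that W applied to the ancilla's conditional state recovers |φ⟩. -/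
/-!
Over the Bell basis of the two clones the cloner output is `(1/√3) ∑ₖ bell k ⊗ wₖ`, where the
ancilla factors `wₖ` are Pauli images of `|φ⟩` and the `ψ⁻` factor is zero. Projecting onto
`bell k` therefore leaves `(1/√3) wₖ` on the ancilla by orthonormality of the Bell basis: its
squared norm is `1/3`, and the inverse Pauli operator turns it back into `|φ⟩ / √3`.
-/

open scoped ComplexConjugate ComplexOrder
open Finset Matrix

noncomputable section

/-- Unnormalized conditional ancilla state after Bell outcome k on the two clones. -/
def condAnc (α β : ℂ) (k : Fin 4) : Fin 2 → ℂ :=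
  fun c => ∑ a : Fin 2, ∑ b : Fin 2, conj (bell k (a, b)) * cloneOut α β (a, b, c)

lemma ofReal_sqrt_two_sq : ((Real.sqrt 2 : ℝ) : ℂ) ^ 2 = 2 := by
  exact_mod_cast Real.sq_sqrt (by norm_num : (0 : ℝ) ≤ 2)

/-- The ancilla factor paired with `bell k` in the Bell expansion of the cloner output, without
the overall factor `1/√3`. The `ψ⁻` factor vanishes because the clones are left in the symmetric
subspace. -/
def ancillaBranch (α β : ℂ) : Fin 4 → Fin 2 → ℂ := ![![-β, α], ![-α, β], ![β, α], 0]

lemma cloneOut_eq_sum_bell (α β : ℂ) (a b c : Fin 2) :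
    cloneOut α β (a, b, c) =
      ((1 / Real.sqrt 3 : ℝ) : ℂ) * ∑ k, bell k (a, b) * ancillaBranch α β k c := by
  have := ofReal_sqrt_two_sq
  have h6 : ((Real.sqrt 6 : ℝ) : ℂ) = Real.sqrt 2 * Real.sqrt 3 := by
    rw [show (6 : ℝ) = 2 * 3 by norm_num, Real.sqrt_mul (by norm_num), Complex.ofReal_mul]
  fin_cases a <;> fin_cases b <;> fin_cases c <;>
    simp [cloneOut, out0, out1, bell, ancillaBranch, Fin.sum_univ_four, h6] <;> grind

lemma bell_orthonormal (k j : Fin 4) :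
    ∑ p, conj (bell k p) * bell j p = if k = j then 1 else 0 := by
  have := ofReal_sqrt_two_sq
  fin_cases k <;> fin_cases j <;>
    simp [bell, Fintype.sum_prod_type, Fin.sum_univ_two, Complex.conj_ofReal] <;> grind

lemma sum_conj_bell_mul_sum_bell (k : Fin 4) (w : Fin 4 → ℂ) :
    ∑ p, conj (bell k p) * ∑ j, bell j p * w j = w k := by
  simp_rw [Finset.mul_sum, ← mul_assoc]
  rw [Finset.sum_comm]
  simp_rw [← Finset.sum_mul, bell_orthonormal, ite_mul, one_mul, zero_mul]
  simp

lemma condAnc_eq (α β : ℂ) (k : Fin 4) :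
    condAnc α β k = ((1 / Real.sqrt 3 : ℝ) : ℂ) • ancillaBranch α β k := by
  funext c
  simp_rw [condAnc, cloneOut_eq_sum_bell, mul_left_comm _ (((1 / Real.sqrt 3 : ℝ) : ℂ)),
    ← Finset.mul_sum, ← Fintype.sum_prod_type', sum_conj_bell_mul_sum_bell, Pi.smul_apply,
    smul_eq_mul]

lemma sum_normSq_ancillaBranch (α β : ℂ) {k : Fin 4} (hk : k ≠ 3) :
    ∑ c, Complex.normSq (ancillaBranch α β k c) = Complex.normSq α + Complex.normSq β := by
  fin_cases k <;> simp_all [ancillaBranch, add_comm]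

lemma smul_σy_mulVec (a b : ℂ) : (Complex.I • σy) *ᵥ ![a, b] = ![b, -a] := by
  ext i; fin_cases i <;> simp [σy, mulVec, dotProduct, Fin.sum_univ_two]

lemma σx_mulVec (a b : ℂ) : σx *ᵥ ![a, b] = ![b, a] := by
  ext i; fin_cases i <;> simp [σx, mulVec, dotProduct, Fin.sum_univ_two]

lemma neg_σz_mulVec (a b : ℂ) : (-σz) *ᵥ ![a, b] = ![-a, b] := by
  ext i; fin_cases i <;> simp [σz, mulVec, dotProduct, Fin.sum_univ_two]

/-- the cloner output decomposes over the Bell basis of the two clones as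
(1/√3)[φ⁺(−β|0⟩+α|1⟩) + φ⁻(β|0⟩+α|1⟩) + ψ⁺(−α|0⟩+β|1⟩)]; each symmetric Bell outcome
occurs with probability 1/3, and iσ_y, σ_x, −σ_z respectively restore |φ⟩ on the ancilla. -/
theorem bell_measurement_restores_ancilla (α β : ℂ)
    (hnorm : Complex.normSq α + Complex.normSq β = 1) :
    (∀ p : I3, cloneOut α β p =
      ((1 / Real.sqrt 3 : ℝ) : ℂ) *
        (bell 0 (p.1, p.2.1) * (![-β, α] p.2.2) +
         bell 2 (p.1, p.2.1) * (![β, α] p.2.2) +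
         bell 1 (p.1, p.2.1) * (![-α, β] p.2.2))) ∧
    (∀ k : Fin 4, k ≠ 3 → ∑ c : Fin 2, Complex.normSq (condAnc α β k c) = 1/3) ∧
    (Complex.I • σy).mulVec (condAnc α β 0) = ((1 / Real.sqrt 3 : ℝ) : ℂ) • φvec α β ∧
    σx.mulVec (condAnc α β 2) = ((1 / Real.sqrt 3 : ℝ) : ℂ) • φvec α β ∧
    (-σz).mulVec (condAnc α β 1) = ((1 / Real.sqrt 3 : ℝ) : ℂ) • φvec α β := by
  refine ⟨?_, fun k hk => ?_, ?_, ?_, ?_⟩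
  · rintro ⟨a, b, c⟩
    simp [cloneOut_eq_sum_bell, Fin.sum_univ_four, ancillaBranch]
    ring
  · have h3 : Complex.normSq ((1 / Real.sqrt 3 : ℝ) : ℂ) = 1 / 3 := by
      rw [Complex.normSq_ofReal, one_div_mul_one_div, Real.mul_self_sqrt (by norm_num)]
    simp_rw [condAnc_eq, Pi.smul_apply, smul_eq_mul, Complex.normSq_mul, ← Finset.mul_sum,
      sum_normSq_ancillaBranch α β hk, hnorm, h3, mul_one]
  · rw [condAnc_eq, mulVec_smul, show ancillaBranch α β 0 = ![-β, α] from rfl, smul_σy_mulVec,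
      neg_neg]; rfl
  · rw [condAnc_eq, mulVec_smul, show ancillaBranch α β 2 = ![β, α] from rfl, σx_mulVec]; rfl
  · rw [condAnc_eq, mulVec_smul, show ancillaBranch α β 1 = ![-α, β] from rfl, neg_σz_mulVec,
      neg_neg]; rfl
end
end

section
/- For arbitrary input |φ⟩ = α|0⟩ + β|1⟩, the cloner output expanded in Bell states of (clone 2, ancilla) reads U|φ⟩|00⟩ = (√3/2)(α|0⟩+β|1⟩)|ψ⁻⟩ + (1/√12)(α|0⟩−β|1⟩)|ψ⁺⟩ + (1/√12)(β|0⟩−α|1⟩)|φ⁺⟩ − (1/√12)(β|0⟩+α|1⟩)|φ⁻⟩, where the first qubit is clone 1. Hence a Bell measurement on clone 2 and the ancilla yields outcome ψ⁻ with probability 3/4 and each symmetric Bell state with probability 1/12, and in every case a suitable unitary on clone 1 (I, σ_z, −iσ_y, −σ_x respectively) restores the input state |φ⟩ deterministically. -/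
open scoped ComplexConjugate ComplexOrder
open Finset Matrix

noncomputable section

/-- Unnormalized conditional state of clone 1 after Bell outcome k on (clone 2, ancilla). -/
def condCA (α β : ℂ) (k : Fin 4) : Fin 2 → ℂ :=
  fun i => ∑ b : Fin 2, ∑ c : Fin 2, conj (bell k (b, c)) * cloneOut α β (i, b, c)

/-! The Bell basis of (clone 2, ancilla) is orthonormal and real, so the cloner output is
recovered from the four conditional states of clone 1 as
`cloneOut α β (i, b, c) = ∑ k, bell k (b, c) * condCA α β k i`. Each conditional state is a
multiple of a Pauli image of `φ = (α, β)`: the antisymmetric outcome ψ⁻ collects the amplitude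
`(√(2/3) + 1/√6)/√2 = √3/2`, the symmetric ones `(√(2/3) - 1/√6)/√2` (ψ⁺) or `(1/√6)/√2` (φ±),
both equal to `1/√12`. The outcome weights are then `3/4` and `1/12`, and undoing the Pauli
restores `φ`. -/

lemma sqrt_six_eq : √6 = √2 * √3 := by
  rw [← Real.sqrt_mul zero_le_two]; norm_num

lemma sqrt_twelve_eq : √12 = 2 * √3 := by
  rw [show (12 : ℝ) = 2 ^ 2 * 3 by norm_num, Real.sqrt_mul (by positivity), Real.sqrt_sq zero_le_two]

lemma ofReal_inv_sqrt_two_mul_inv_sqrt_six :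
    ((1 / √2 : ℝ) : ℂ) * (1 / √6 : ℝ) = (1 / √12 : ℝ) := by
  norm_cast
  rw [sqrt_six_eq, sqrt_twelve_eq]
  field_simp
  norm_num

lemma ofReal_inv_sqrt_two_mul_add :
    ((1 / √2 : ℝ) : ℂ) * ((√(2 / 3) : ℝ) + (1 / √6 : ℝ)) = (√3 / 2 : ℝ) := by
  norm_cast
  rw [Real.sqrt_div' _ (by norm_num), sqrt_six_eq]
  field_simp
  norm_num

lemma ofReal_inv_sqrt_two_mul_sub :
    ((1 / √2 : ℝ) : ℂ) * ((√(2 / 3) : ℝ) - (1 / √6 : ℝ)) = (1 / √12 : ℝ) := by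
  norm_cast
  rw [Real.sqrt_div' _ (by norm_num), sqrt_six_eq, sqrt_twelve_eq]
  field_simp
  norm_num

lemma normSq_ofReal_sqrt_three_div_two : Complex.normSq ((√3 / 2 : ℝ) : ℂ) = 3 / 4 := by
  rw [Complex.normSq_ofReal, ← sq, div_pow, Real.sq_sqrt (by norm_num)]
  norm_num

lemma normSq_ofReal_inv_sqrt_twelve : Complex.normSq ((1 / √12 : ℝ) : ℂ) = 1 / 12 := by
  rw [Complex.normSq_ofReal, ← sq, div_pow, Real.sq_sqrt (by norm_num)]
  norm_num

lemma sum_normSq_smul {ι : Type*} [Fintype ι] (c : ℂ) (v : ι → ℂ) :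
    ∑ i, Complex.normSq ((c • v) i) = Complex.normSq c * ∑ i, Complex.normSq (v i) := by
  simp only [Pi.smul_apply, smul_eq_mul, Complex.normSq_mul, Finset.mul_sum]

lemma sum_normSq_vec_two (a b : ℂ) :
    ∑ i, Complex.normSq (![a, b] i) = Complex.normSq a + Complex.normSq b :=
  Fin.sum_univ_two _

lemma bell_expansion (f : Fin 2 × Fin 2 → ℂ) (p : Fin 2 × Fin 2) :
    f p = ∑ k : Fin 4, bell k p * ∑ b : Fin 2, ∑ c : Fin 2, conj (bell k (b, c)) * f (b, c) := by
  have h : ((1 / √2 : ℝ) : ℂ) * (1 / √2 : ℝ) = 1 / 2 := by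
    rw [← Complex.ofReal_mul, div_mul_div_comm, Real.mul_self_sqrt zero_le_two, one_mul]
    norm_num
  obtain ⟨a, b⟩ := p
  fin_cases a <;> fin_cases b <;>
    simp +decide only [bell, Fin.sum_univ_four, Fin.sum_univ_two, Fin.zero_eta, Fin.mk_one,
      Matrix.cons_val_zero, Matrix.cons_val_one, Matrix.cons_val, ↓reduceIte, Complex.conj_ofReal,
      map_neg, map_zero] <;>
    linear_combination (-(2 : ℂ) * f _) * h

lemma cloneOut_eq_sum_bell_mul_condCA (α β : ℂ) (i b c : Fin 2) :
    cloneOut α β (i, b, c) = ∑ k : Fin 4, bell k (b, c) * condCA α β k i :=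
  bell_expansion (fun q => cloneOut α β (i, q.1, q.2)) (b, c)

lemma condCA_psiMinus (α β : ℂ) : condCA α β 3 = ((√3 / 2 : ℝ) : ℂ) • φvec α β := by
  funext i
  fin_cases i <;> simp +decide only [condCA, cloneOut, out0, out1, bell, φvec,
    Fin.sum_univ_two, Fin.zero_eta, Fin.mk_one, Matrix.cons_val_zero, Matrix.cons_val_one,
    Matrix.cons_val, ↓reduceIte, Complex.conj_ofReal, map_neg, map_zero, Pi.smul_apply, smul_eq_mul]
  · linear_combination α * ofReal_inv_sqrt_two_mul_add
  · linear_combination β * ofReal_inv_sqrt_two_mul_add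

lemma condCA_psiPlus (α β : ℂ) : condCA α β 1 = ((1 / √12 : ℝ) : ℂ) • ![α, -β] := by
  funext i
  fin_cases i <;> simp +decide only [condCA, cloneOut, out0, out1, bell,
    Fin.sum_univ_two, Fin.zero_eta, Fin.mk_one, Matrix.cons_val_zero, Matrix.cons_val_one,
    ↓reduceIte, Complex.conj_ofReal, map_zero, Pi.smul_apply, smul_eq_mul]
  · linear_combination α * ofReal_inv_sqrt_two_mul_sub
  · linear_combination -β * ofReal_inv_sqrt_two_mul_sub

lemma condCA_phiPlus (α β : ℂ) : condCA α β 0 = ((1 / √12 : ℝ) : ℂ) • ![β, -α] := by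
  funext i
  fin_cases i <;> simp +decide only [condCA, cloneOut, out0, out1, bell,
    Fin.sum_univ_two, Fin.zero_eta, Fin.mk_one, Matrix.cons_val_zero, Matrix.cons_val_one,
    ↓reduceIte, Complex.conj_ofReal, map_zero, Pi.smul_apply, smul_eq_mul]
  · linear_combination β * ofReal_inv_sqrt_two_mul_inv_sqrt_six
  · linear_combination -α * ofReal_inv_sqrt_two_mul_inv_sqrt_six

lemma condCA_phiMinus (α β : ℂ) : condCA α β 2 = -((1 / √12 : ℝ) : ℂ) • ![β, α] := by
  funext i
  fin_cases i <;> simp +decide only [condCA, cloneOut, out0, out1, bell,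
    Fin.sum_univ_two, Fin.zero_eta, Fin.mk_one, Matrix.cons_val_zero, Matrix.cons_val_one,
    Matrix.cons_val, ↓reduceIte, Complex.conj_ofReal, map_neg, map_zero, Pi.smul_apply, smul_eq_mul]
  · linear_combination -β * ofReal_inv_sqrt_two_mul_inv_sqrt_six
  · linear_combination -α * ofReal_inv_sqrt_two_mul_inv_sqrt_six

lemma σz_mulVec (a b : ℂ) : σz *ᵥ ![a, b] = ![a, -b] := by
  ext i; fin_cases i <;> simp [σz, Matrix.mulVec, dotProduct, Fin.sum_univ_two]

lemma neg_I_smul_σy_mulVec (a b : ℂ) : (-(Complex.I • σy)) *ᵥ ![a, b] = ![-b, a] := by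
  ext i; fin_cases i <;> simp [σy, Matrix.mulVec, dotProduct, Fin.sum_univ_two]

lemma cloneOut_bell_expansion (α β : ℂ) (p : I3) : cloneOut α β p =
      ((√3 / 2 : ℝ) : ℂ) * (φvec α β p.1) * bell 3 (p.2.1, p.2.2) +
      ((1 / √12 : ℝ) : ℂ) * (![α, -β] p.1) * bell 1 (p.2.1, p.2.2) +
      ((1 / √12 : ℝ) : ℂ) * (![β, -α] p.1) * bell 0 (p.2.1, p.2.2) -
      ((1 / √12 : ℝ) : ℂ) * (![β, α] p.1) * bell 2 (p.2.1, p.2.2) := by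
  obtain ⟨i, b, c⟩ := p
  rw [cloneOut_eq_sum_bell_mul_condCA, Fin.sum_univ_four, condCA_phiPlus, condCA_psiPlus,
    condCA_phiMinus, condCA_psiMinus]
  simp only [Pi.smul_apply, smul_eq_mul]
  ring

lemma sum_normSq_condCA_psiMinus {α β : ℂ}
    (hnorm : Complex.normSq α + Complex.normSq β = 1) :
    ∑ i, Complex.normSq (condCA α β 3 i) = 3 / 4 := by
  rw [condCA_psiMinus, sum_normSq_smul, normSq_ofReal_sqrt_three_div_two, φvec,
    sum_normSq_vec_two, hnorm, mul_one]

lemma sum_normSq_condCA_of_ne_psiMinus {α β : ℂ}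
    (hnorm : Complex.normSq α + Complex.normSq β = 1) {k : Fin 4} (hk : k ≠ 3) :
    ∑ i, Complex.normSq (condCA α β k i) = 1 / 12 := by
  obtain rfl | rfl | rfl : k = 0 ∨ k = 1 ∨ k = 2 := by omega
  all_goals
    simp only [condCA_phiPlus, condCA_psiPlus, condCA_phiMinus, sum_normSq_smul,
      sum_normSq_vec_two, Complex.normSq_neg, normSq_ofReal_inv_sqrt_twelve]
    linear_combination (1 / 12 : ℝ) * hnorm

/-- the cloner output expanded in Bell states of (clone 2, ancilla) is
(√3/2)|φ⟩ψ⁻ + (1/√12)(α|0⟩−β|1⟩)ψ⁺ + (1/√12)(β|0⟩−α|1⟩)φ⁺ − (1/√12)(β|0⟩+α|1⟩)φ⁻;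
outcome ψ⁻ has probability 3/4, each symmetric Bell state 1/12, and I, σ_z, −iσ_y, −σ_x
respectively restore |φ⟩ on clone 1. -/
theorem bell_measurement_restores_clone (α β : ℂ)
    (hnorm : Complex.normSq α + Complex.normSq β = 1) :
    (∀ p : I3, cloneOut α β p =
      ((Real.sqrt 3 / 2 : ℝ) : ℂ) * (φvec α β p.1) * bell 3 (p.2.1, p.2.2) +
      ((1 / Real.sqrt 12 : ℝ) : ℂ) * (![α, -β] p.1) * bell 1 (p.2.1, p.2.2) +
      ((1 / Real.sqrt 12 : ℝ) : ℂ) * (![β, -α] p.1) * bell 0 (p.2.1, p.2.2) -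
      ((1 / Real.sqrt 12 : ℝ) : ℂ) * (![β, α] p.1) * bell 2 (p.2.1, p.2.2)) ∧
    (∑ i : Fin 2, Complex.normSq (condCA α β 3 i) = 3/4) ∧
    (∀ k : Fin 4, k ≠ 3 → ∑ i : Fin 2, Complex.normSq (condCA α β k i) = 1/12) ∧
    condCA α β 3 = ((Real.sqrt 3 / 2 : ℝ) : ℂ) • φvec α β ∧
    σz.mulVec (condCA α β 1) = ((1 / Real.sqrt 12 : ℝ) : ℂ) • φvec α β ∧
    (-(Complex.I • σy)).mulVec (condCA α β 0) = ((1 / Real.sqrt 12 : ℝ) : ℂ) • φvec α β ∧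
    (-σx).mulVec (condCA α β 2) = ((1 / Real.sqrt 12 : ℝ) : ℂ) • φvec α β := by
  refine ⟨cloneOut_bell_expansion α β, sum_normSq_condCA_psiMinus hnorm,
    fun _ => sum_normSq_condCA_of_ne_psiMinus hnorm, condCA_psiMinus α β, ?_, ?_, ?_⟩
  · rw [condCA_psiPlus, Matrix.mulVec_smul, σz_mulVec, neg_neg, φvec]
  · rw [condCA_phiPlus, Matrix.mulVec_smul, neg_I_smul_σy_mulVec, neg_neg, φvec]
  · rw [condCA_phiMinus, Matrix.mulVec_smul, Matrix.neg_mulVec, σx_mulVec, neg_smul_neg, φvec]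
end
end

section
/- Suppose Kraus operators A_i (first step) and B_j^{(i)} (second step) on ℂ² satisfy ∑_{j∈L(K)} ∑_{i∈K} B_j^{(i)} A_i ρ A_i† B_j^{(i)}† = p ρ for some fixed p > 0 and all density matrices ρ on ℂ². Then for each pair (i,j) there is p_{ij} ≥ 0 with B_j^{(i)} A_i ρ A_i† B_j^{(i)}† = p_{ij} ρ for all ρ; equivalently, each B_j^{(i)}A_i is proportional to the identity (possibly with proportionality zero). -/
open scoped ComplexConjugate ComplexOrder
open Finset Matrix

noncomputable section

/-!
Put a pure state `ρ = |v⟩⟨v|` into the identity `∑ₖ Cₖ ρ Cₖ† = p ρ`, where `Cₖ` runs over the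
branches `B_j⁽ⁱ⁾ A_i`, and evaluate the quadratic form of both sides at a vector `u ⊥ v`: this gives
`∑ₖ |⟨u, Cₖ v⟩|² = p |⟨u, v⟩|² = 0`, so every branch maps `v` into `ℂ v`. An operator of which
every vector is an eigenvector is a scalar `c • 1`, and then `Cₖ ρ Cₖ† = |c|² ρ`.
-/

section ScalarMatrix

variable {𝕜 n : Type*} [RCLike 𝕜] [Fintype n]

lemma not_linearIndependent_of_forall_star_dotProduct_eq_zero {v w : n → 𝕜}
    (h : ∀ u, star u ⬝ᵥ v = 0 → star u ⬝ᵥ w = 0) : ¬ LinearIndependent 𝕜 ![v, w] := by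
  set a := star v ⬝ᵥ v with ha
  set b := star v ⬝ᵥ w
  -- `u` is `‖v‖²` times the component of `w` orthogonal to `v`
  set u := a • w - b • v
  have ha_star : star a = a := (star_dotProduct v v).symm
  have hb_star : star b = star w ⬝ᵥ v := (star_dotProduct w v).symm
  have huv : star u ⬝ᵥ v = 0 := by
    simp only [u, star_sub, star_smul, sub_dotProduct, smul_dotProduct, smul_eq_mul, ha_star,
      ← hb_star, ← ha]
    ring
  have huw := h u huv
  have hu : u = 0 := by
    rw [← dotProduct_star_self_eq_zero]
    simp only [u, dotProduct_sub, dotProduct_smul, huv, huw, smul_zero, sub_zero]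
  intro hli
  rw [LinearIndependent.pair_iff] at hli
  by_cases ha0 : a = 0
  · exact one_ne_zero (hli 1 0 (by simp [dotProduct_star_self_eq_zero.1 ha0])).1
  · refine ha0 (neg_eq_zero.1 (hli b (-a) ?_).2)
    rw [neg_smul, ← sub_eq_add_neg, ← neg_sub, neg_eq_zero]
    exact hu

lemma exists_eq_smul_one_of_forall_star_dotProduct_mulVec_eq_zero [DecidableEq n]
    {C : Matrix n n 𝕜} (h : ∀ u v, star u ⬝ᵥ v = 0 → star u ⬝ᵥ (C *ᵥ v) = 0) :
    ∃ c : 𝕜, C = c • 1 := by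
  obtain ⟨c, hc⟩ := LinearMap.exists_eq_smul_id_of_forall_notLinearIndependent
    fun v => not_linearIndependent_of_forall_star_dotProduct_eq_zero (w := C.toLin' v) (h · v)
  exact ⟨c, Matrix.toLin'.injective (by rw [hc, map_smul, Matrix.toLin'_one]; rfl)⟩

lemma smul_one_mul_mul_conjTranspose [DecidableEq n] (a : 𝕜) (ρ : Matrix n n 𝕜) :
    (a • 1 : Matrix n n 𝕜) * ρ * (a • 1)ᴴ = (a * star a) • ρ := by
  simp [smul_smul, mul_comm]

end ScalarMatrix

section KrausSum

variable {𝕜 n ι : Type*} [RCLike 𝕜] [Fintype n] [Fintype ι]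

lemma sum_conj_eq_smul_of_posSemidef {C : ι → Matrix n n 𝕜} {c : 𝕜}
    (h : ∀ ρ : Matrix n n 𝕜, ρ.PosSemidef → ρ.trace = 1 → ∑ k, C k * ρ * (C k)ᴴ = c • ρ)
    {ρ : Matrix n n 𝕜} (hρ : ρ.PosSemidef) : ∑ k, C k * ρ * (C k)ᴴ = c • ρ := by
  by_cases hρ0 : ρ = 0
  · simp [hρ0]
  have ht : ρ.trace ≠ 0 := fun ht => hρ0 (hρ.trace_eq_zero_iff.1 ht)
  have hnorm := h (ρ.trace⁻¹ • ρ) (hρ.smul (inv_nonneg.2 hρ.trace_nonneg))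
    (by rw [trace_smul, smul_eq_mul, inv_mul_cancel₀ ht])
  simp only [Matrix.mul_smul, Matrix.smul_mul, ← Finset.smul_sum, smul_comm c] at hnorm
  exact smul_right_injective _ (inv_ne_zero ht) hnorm

lemma star_dotProduct_vecMulVec_mulVec (u w : n → 𝕜) :
    star u ⬝ᵥ (vecMulVec w (star w) *ᵥ u) = (star u ⬝ᵥ w) * star (star u ⬝ᵥ w) := by
  rw [vecMulVec_mulVec, ← star_dotProduct w u]
  simp [dotProduct_smul, mul_comm]

lemma mul_vecMulVec_mul_conjTranspose (C : Matrix n n 𝕜) (v : n → 𝕜) :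
    C * vecMulVec v (star v) * Cᴴ = vecMulVec (C *ᵥ v) (star (C *ᵥ v)) := by
  rw [mul_vecMulVec, vecMulVec_mul, star_mulVec]

lemma star_dotProduct_mulVec_eq_zero_of_sum_conj_eq_smul {C : ι → Matrix n n 𝕜} {c : 𝕜}
    {u v : n → 𝕜}
    (hC : ∑ k, C k * vecMulVec v (star v) * (C k)ᴴ = c • vecMulVec v (star v))
    (hu : star u ⬝ᵥ v = 0) (k : ι) : star u ⬝ᵥ (C k *ᵥ v) = 0 := by
  have hq := congrArg (fun M => star u ⬝ᵥ (M *ᵥ u)) hC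
  simp only [sum_mulVec, dotProduct_sum, mul_vecMulVec_mul_conjTranspose,
    star_dotProduct_vecMulVec_mulVec, smul_mulVec, dotProduct_smul, hu, zero_mul,
    smul_zero] at hq
  have hk := (Finset.sum_eq_zero_iff_of_nonneg fun k _ => mul_star_self_nonneg _).1 hq k
    (Finset.mem_univ k)
  exact CStarRing.mul_star_self_eq_zero_iff _ |>.1 hk

lemma exists_eq_smul_one_of_sum_conj_eq_smul [DecidableEq n] {C : ι → Matrix n n 𝕜} {c : 𝕜}
    (h : ∀ ρ : Matrix n n 𝕜, ρ.PosSemidef → ρ.trace = 1 → ∑ k, C k * ρ * (C k)ᴴ = c • ρ)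
    (k : ι) : ∃ a : 𝕜, C k = a • 1 :=
  exists_eq_smul_one_of_forall_star_dotProduct_mulVec_eq_zero fun _ v hu =>
    star_dotProduct_mulVec_eq_zero_of_sum_conj_eq_smul
      (sum_conj_eq_smul_of_posSemidef h (posSemidef_vecMulVec_self_star v)) hu k

end KrausSum

theorem restoration_branches_general {ι κ : Type} [Fintype ι] [Fintype κ]
    (A : ι → Matrix (Fin 2) (Fin 2) ℂ) (B : ι → κ → Matrix (Fin 2) (Fin 2) ℂ)
    (p : ℝ)
    (h : ∀ ρ : Matrix (Fin 2) (Fin 2) ℂ, ρ.PosSemidef → ρ.trace = 1 →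
      ∑ i : ι, ∑ j : κ, (B i j * A i) * ρ * (B i j * A i)ᴴ = (p : ℂ) • ρ) :
    ∀ (i : ι) (j : κ),
      (∃ pij : ℝ, 0 ≤ pij ∧
        ∀ ρ : Matrix (Fin 2) (Fin 2) ℂ, ρ.PosSemidef → ρ.trace = 1 →
          (B i j * A i) * ρ * (B i j * A i)ᴴ = (pij : ℂ) • ρ) ∧
      ∃ c : ℂ, B i j * A i = c • 1 := by
  intro i j
  obtain ⟨a, ha⟩ := exists_eq_smul_one_of_sum_conj_eq_smul
    (C := fun x : ι × κ => B x.1 x.2 * A x.1) (fun ρ hρ htr => by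
      rw [Fintype.sum_prod_type]
      exact h ρ hρ htr) (i, j)
  refine ⟨⟨Complex.normSq a, Complex.normSq_nonneg a, fun ρ _ _ => ?_⟩, a, ha⟩
  rw [ha, smul_one_mul_mul_conjTranspose, Complex.star_def, Complex.mul_conj]

/-- if a two-step Kraus process reproduces p·ρ for all density matrices ρ,
then each individual branch satisfies B_j⁽ⁱ⁾A_i ρ A_i†B_j⁽ⁱ⁾† = p_ij ρ, i.e. each
B_j⁽ⁱ⁾A_i is proportional to the identity. -/
theorem restoration_branches {ι κ : Type} [Fintype ι] [Fintype κ]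
    (A : ι → Matrix (Fin 2) (Fin 2) ℂ) (B : ι → κ → Matrix (Fin 2) (Fin 2) ℂ)
    (p : ℝ) (hp : 0 < p)
    (h : ∀ ρ : Matrix (Fin 2) (Fin 2) ℂ, ρ.PosSemidef → ρ.trace = 1 →
      ∑ i : ι, ∑ j : κ, (B i j * A i) * ρ * (B i j * A i)ᴴ = (p : ℂ) • ρ) :
    ∀ (i : ι) (j : κ),
      (∃ pij : ℝ, 0 ≤ pij ∧
        ∀ ρ : Matrix (Fin 2) (Fin 2) ℂ, ρ.PosSemidef → ρ.trace = 1 →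
          (B i j * A i) * ρ * (B i j * A i)ᴴ = (pij : ℂ) • ρ) ∧
      ∃ c : ℂ, B i j * A i = c • 1 :=
  restoration_branches_general A B p h
end
end

section
/- Let A be a 2×2 complex matrix with singular value decomposition A = U diag(a,b) V, where 1 ≥ a ≥ b > 0 and U, V unitary. Then B = V† diag(b/a, 1) U† has operator norm at most 1 (so I − B†B ≥ 0, making B a valid Kraus operator of a measurement), and BA = b·I. Moreover b is the largest constant c such that there exists a contraction B' with B'A = c·I. -/
/-!
Through the singular value decomposition, `B = V† diag(b/a, 1) U†` is a diagonal contraction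
framed by unitaries, and `B A = V† diag(b, b) V = b I`. For optimality, feed in the right
singular vector `v = V† e₁` of the smaller singular value: `A v = b U e₁`, so any contraction
`B'` with `B' A = c I` gives `|c| = ‖B' A v‖ ≤ ‖A v‖ = b`.
-/

open scoped ComplexConjugate ComplexOrder
open Finset Matrix

noncomputable section

namespace Matrix

variable {m n k R : Type*}

section Ring

variable [CommRing R] [PartialOrder R] [StarRing R]

/-- Operator norm at most `1`, in the form `1 - Bᴴ B ≥ 0`. -/
def IsContraction [Fintype m] [DecidableEq n] (B : Matrix m n R) : Prop :=
  (1 - Bᴴ * B).PosSemidef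

theorem IsContraction.isometry_mul [Fintype k] [Fintype m] [DecidableEq m] [DecidableEq n]
    {W : Matrix k m R} (hW : Wᴴ * W = 1) {B : Matrix m n R} (hB : B.IsContraction) :
    (W * B).IsContraction := by
  rwa [IsContraction, conjTranspose_mul, Matrix.mul_assoc, ← Matrix.mul_assoc Wᴴ, hW,
    Matrix.one_mul]

theorem IsContraction.mul_isometry [Fintype k] [Fintype m] [Fintype n] [DecidableEq m]
    [DecidableEq n] {B : Matrix k m R} (hB : B.IsContraction) {W : Matrix m n R}
    (hW : Wᴴ * W = 1) : (B * W).IsContraction := by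
  have h : 1 - (B * W)ᴴ * (B * W) = Wᴴ * (1 - Bᴴ * B) * W := by
    rw [conjTranspose_mul, Matrix.mul_sub, Matrix.sub_mul, Matrix.mul_one, hW]
    simp only [Matrix.mul_assoc]
  rw [IsContraction, h]
  exact hB.conjTranspose_mul_mul_same W

variable [StarOrderedRing R]

theorem isContraction_diagonal_iff [Fintype n] [DecidableEq n] {d : n → R} :
    (diagonal d).IsContraction ↔ ∀ i, star (d i) * d i ≤ 1 := by
  rw [IsContraction, diagonal_conjTranspose, diagonal_mul_diagonal, ← diagonal_one,
    diagonal_sub, posSemidef_diagonal_iff]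
  simp only [Pi.star_apply, sub_nonneg]

theorem IsContraction.dotProduct_mulVec_le [Fintype m] [Fintype n] [DecidableEq n]
    {B : Matrix m n R} (hB : B.IsContraction) (v : n → R) :
    star (B *ᵥ v) ⬝ᵥ (B *ᵥ v) ≤ star v ⬝ᵥ v := by
  have h := hB.dotProduct_mulVec_nonneg v
  rwa [sub_mulVec, one_mulVec, dotProduct_sub, ← mulVec_mulVec, dotProduct_mulVec,
    ← star_mulVec, sub_nonneg] at h

theorem IsContraction.smul_dotProduct_le [Fintype m] [Fintype n] [DecidableEq m] [DecidableEq n]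
    {B : Matrix m n R} (hB : B.IsContraction) {A : Matrix n m R} {c : R} (hBA : B * A = c • 1)
    (v : m → R) : star (c • v) ⬝ᵥ (c • v) ≤ star (A *ᵥ v) ⬝ᵥ (A *ᵥ v) := by
  have h : c • v = B *ᵥ (A *ᵥ v) := by rw [mulVec_mulVec, hBA, smul_mulVec, one_mulVec]
  exact h ▸ hB.dotProduct_mulVec_le _

end Ring

variable [CommRing R] [StarRing R]

theorem dotProduct_star_mulVec_isometry [Fintype m] [Fintype n] [DecidableEq n]
    {W : Matrix m n R} (hW : Wᴴ * W = 1) (v : n → R) :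
    star (W *ᵥ v) ⬝ᵥ (W *ᵥ v) = star v ⬝ᵥ v := by
  rw [star_mulVec, dotProduct_mulVec, vecMul_vecMul, hW, vecMul_one]

theorem mul_diagonal_mul_mulVec_conjTranspose_mulVec_single [Fintype n] [DecidableEq n]
    {U : Matrix m n R} {V : Matrix n n R} (hV : V * Vᴴ = 1) (d : n → R) (j : n) :
    (U * diagonal d * V) *ᵥ (Vᴴ *ᵥ Pi.single j 1) = d j • (U *ᵥ Pi.single j 1) := by
  rw [mulVec_mulVec, Matrix.mul_assoc, hV, Matrix.mul_one, ← mulVec_mulVec,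
    diagonal_mulVec_single, ← smul_eq_mul, Pi.single_smul', mulVec_smul]

theorem IsContraction.sq_le_sq_of_mul_eq_smul_one [Fintype m] [Fintype n] [DecidableEq m]
    [DecidableEq n] {B : Matrix m n ℂ} (hB : B.IsContraction) {A : Matrix n m ℂ} {c s : ℝ}
    (hBA : B * A = (c : ℂ) • 1) {v : m → ℂ} {w : n → ℂ} (hAv : A *ᵥ v = (s : ℂ) • w)
    (hv : star v ⬝ᵥ v = 1) (hw : star w ⬝ᵥ w = 1) : c ^ 2 ≤ s ^ 2 := by
  have h := hB.smul_dotProduct_le hBA v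
  simp only [hAv, star_smul, smul_dotProduct, dotProduct_smul, hv, hw, smul_eq_mul,
    RCLike.star_def, Complex.conj_ofReal, mul_one] at h
  rw [sq, sq]
  exact_mod_cast h

theorem isContraction_diagonal_div_one {a b : ℝ} (hb : 0 ≤ b) (hba : b ≤ a) :
    (diagonal ![((b / a : ℝ) : ℂ), 1]).IsContraction := by
  refine isContraction_diagonal_iff.mpr fun i => ?_
  fin_cases i
  · have hr : b / a * (b / a) ≤ 1 :=
      mul_le_one₀ (div_le_one_of_le₀ hba (hb.trans hba)) (div_nonneg hb (hb.trans hba))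
        (div_le_one_of_le₀ hba (hb.trans hba))
    simpa using (Complex.real_le_real.mpr hr : ((b / a * (b / a) : ℝ) : ℂ) ≤ (1 : ℝ))
  · simp

theorem diagonal_div_one_mul_diagonal {a : ℝ} (ha : a ≠ 0) (b : ℝ) :
    diagonal ![((b / a : ℝ) : ℂ), 1] * diagonal ![(a : ℂ), (b : ℂ)] = (b : ℂ) • 1 := by
  rw [diagonal_mul_diagonal, smul_one_eq_diagonal]
  congr 1
  ext i
  fin_cases i
  · simp [div_mul_cancel₀ _ (Complex.ofReal_ne_zero.mpr ha)]
  · simp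

end Matrix

theorem optimal_restoration_filter_general (A U V : Matrix (Fin 2) (Fin 2) ℂ) (a b : ℝ)
    (hU : U ∈ Matrix.unitaryGroup (Fin 2) ℂ) (hV : V ∈ Matrix.unitaryGroup (Fin 2) ℂ)
    (hba : b ≤ a) (hb : 0 < b)
    (hA : A = U * Matrix.diagonal ![(a : ℂ), (b : ℂ)] * V) :
    (1 - (Vᴴ * Matrix.diagonal ![((b/a : ℝ) : ℂ), 1] * Uᴴ)ᴴ *
         (Vᴴ * Matrix.diagonal ![((b/a : ℝ) : ℂ), 1] * Uᴴ)).PosSemidef ∧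
    (Vᴴ * Matrix.diagonal ![((b/a : ℝ) : ℂ), 1] * Uᴴ) * A = (b : ℂ) • 1 ∧
    ∀ (c : ℝ) (B' : Matrix (Fin 2) (Fin 2) ℂ),
      (1 - B'ᴴ * B').PosSemidef → B' * A = (c : ℂ) • 1 → c ≤ b := by
  have hUU : Uᴴ * U = 1 := mem_unitaryGroup_iff'.mp hU
  have hUU' : Uᴴᴴ * Uᴴ = 1 := by
    rw [conjTranspose_conjTranspose]; exact mem_unitaryGroup_iff.mp hU
  have hVV : Vᴴ * V = 1 := mem_unitaryGroup_iff'.mp hV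
  have hVV' : Vᴴᴴ * Vᴴ = 1 := by
    rw [conjTranspose_conjTranspose]; exact mem_unitaryGroup_iff.mp hV
  refine ⟨((isContraction_diagonal_div_one hb.le hba).isometry_mul hVV').mul_isometry hUU',
    ?_, fun c B' hB' hB'A => ?_⟩
  · calc _ = Vᴴ * (diagonal ![((b / a : ℝ) : ℂ), 1] * (Uᴴ * U) *
            diagonal ![(a : ℂ), (b : ℂ)]) * V := by simp only [hA, Matrix.mul_assoc]
      _ = (b : ℂ) • 1 := by
        rw [hUU, Matrix.mul_one, diagonal_div_one_mul_diagonal (hb.trans_le hba).ne',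
          Matrix.mul_smul, Matrix.mul_one, Matrix.smul_mul, hVV]
  · have he : star (Pi.single 1 1 : Fin 2 → ℂ) ⬝ᵥ Pi.single 1 1 = 1 := by simp
    have hv : A *ᵥ (Vᴴ *ᵥ Pi.single 1 1) = (b : ℂ) • (U *ᵥ Pi.single 1 1) :=
      hA ▸ mul_diagonal_mul_mulVec_conjTranspose_mulVec_single
        (by simpa only [conjTranspose_conjTranspose] using hVV') _ 1
    have hc := IsContraction.sq_le_sq_of_mul_eq_smul_one hB' hB'A hv
      (by rw [dotProduct_star_mulVec_isometry hVV', he])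
      (by rw [dotProduct_star_mulVec_isometry hUU, he])
    exact (abs_le_of_sq_le_sq' hc hb.le).2

/-- for A = U diag(a,b) V with 1 ≥ a ≥ b > 0 and U, V unitary, the matrix
B = V† diag(b/a, 1) U† is a contraction (I − B†B ≥ 0) with BA = b·I, and b is the
largest constant c admitting a contraction B' with B'A = c·I. -/
theorem optimal_restoration_filter (A U V : Matrix (Fin 2) (Fin 2) ℂ) (a b : ℝ)
    (hU : U ∈ Matrix.unitaryGroup (Fin 2) ℂ) (hV : V ∈ Matrix.unitaryGroup (Fin 2) ℂ)
    (ha1 : a ≤ 1) (hba : b ≤ a) (hb : 0 < b)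
    (hA : A = U * Matrix.diagonal ![(a : ℂ), (b : ℂ)] * V) :
    (1 - (Vᴴ * Matrix.diagonal ![((b/a : ℝ) : ℂ), 1] * Uᴴ)ᴴ *
         (Vᴴ * Matrix.diagonal ![((b/a : ℝ) : ℂ), 1] * Uᴴ)).PosSemidef ∧
    (Vᴴ * Matrix.diagonal ![((b/a : ℝ) : ℂ), 1] * Uᴴ) * A = (b : ℂ) • 1 ∧
    ∀ (c : ℝ) (B' : Matrix (Fin 2) (Fin 2) ℂ),
      (1 - B'ᴴ * B').PosSemidef → B' * A = (c : ℂ) • 1 → c ≤ b :=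
  optimal_restoration_filter_general A U V a b hU hV hba hb hA
end
end
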